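/- arXiv:2412.16517 — 7 statements merged into one kernel-verified Lean document; each statement's English description precedes it below -/
import Mathlib

section
/- For every integer q ≥ 2, the formal power series V_q(X) = ∑_{n≥1} ν_q(n) X^n, viewed as an element of ℂ[[X]], is not holonomic; that is, there do not exist an integer r ≥ 0 and polynomials a_0(X), a_1(X), …, a_r(X) ∈ ℂ[X] with a_r(X) ≠ 0 such that a_r(X)·(d^r/dX^r)V_q(X) + a_{r-1}(X)·(d^{r-1}/dX^{r-1})V_q(X) + ⋯ + a_1(X)·(d/dX)V_q(X) + a_0(X)·V_q(X) = 0 in ℂ[[X]]. -/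
/-! Auxiliary definitions and lemmas for `Vq_not_holonomic`. -/

/-- `VqAA i m = (m+1)(m+2)⋯(m+i)`. -/
def VqAA (i m : ℕ) : ℕ := ∏ t ∈ Finset.range i, (m + t + 1)

lemma VqAA_succ (i m : ℕ) : VqAA (i+1) m = VqAA i m * (m + i + 1) := by
  simp [VqAA, Finset.prod_range_succ]

lemma coeff_iter_deriv (F : PowerSeries ℂ) (i : ℕ) : ∀ m : ℕ,
    (PowerSeries.coeff m) ((⇑(PowerSeries.derivative ℂ))^[i] F)
      = (VqAA i m : ℂ) * PowerSeries.coeff (m+i) F := by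
  induction i generalizing F with
  | zero => intro m; simp [VqAA]
  | succ i ih =>
    intro m
    rw [Function.iterate_succ_apply, ih, PowerSeries.coeff_derivative, VqAA_succ]
    push_cast
    rw [show m + (i+1) = m + i + 1 by omega]
    ring

lemma pv_eq' {q : ℕ} (hq : 2 ≤ q) {n k : ℕ} (h1 : q^k ∣ n) (h2 : ¬ q^(k+1) ∣ n) :
    padicValNat q n = k := by
  have hn : 0 < n := by
    rcases Nat.eq_zero_or_pos n with h | h
    · exact absurd (h ▸ dvd_zero _) h2
    · exact h
  rw [padicValNat_def' (by omega : q ≠ 1) hn.ne']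
  exact multiplicity_eq_of_dvd_of_not_dvd h1 h2

lemma pv_not_dvd {q : ℕ} (hq : 2 ≤ q) {e : ℕ} (he : 0 < e) :
    ¬ q^(padicValNat q e + 1) ∣ e := by
  have hf : FiniteMultiplicity q e := Nat.finiteMultiplicity_iff.2 ⟨by omega, he⟩
  have := padicValNat_def' (by omega : q ≠ 1) he.ne'
  exact this ▸ hf.not_pow_dvd_of_multiplicity_lt (by omega)

lemma pv_pow {q : ℕ} (hq : 2 ≤ q) (k : ℕ) : padicValNat q (q^k) = k := by
  refine pv_eq' hq dvd_rfl (fun h => ?_)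
  have := Nat.le_of_dvd (pow_pos (by omega : 0 < q) k) h
  exact absurd this (by
    have : q^k < q^(k+1) := Nat.pow_lt_pow_right (by omega) (by omega)
    omega)

lemma pv_lt_of_le {q : ℕ} (hq : 2 ≤ q) {e k : ℕ} (he : 0 < e) (hek : e < q^k) :
    padicValNat q e + 1 ≤ k := by
  have h1 : q ^ padicValNat q e ∣ e := pow_padicValNat_dvd
  have h2 : q ^ padicValNat q e ≤ e := Nat.le_of_dvd he h1
  have h3 : q ^ padicValNat q e < q ^ k := lt_of_le_of_lt h2 hek
  have := (Nat.pow_lt_pow_iff_right (by omega : 1 < q)).1 h3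
  omega

lemma pv_add_pow {q : ℕ} (hq : 2 ≤ q) {e k : ℕ} (he : 0 < e) (hek : e < q^k) :
    padicValNat q (q^k + e) = padicValNat q e := by
  set v := padicValNat q e with hv
  have hvk : v + 1 ≤ k := pv_lt_of_le hq he hek
  refine pv_eq' hq ?_ ?_
  · exact Dvd.dvd.add (pow_dvd_pow q (by omega)) pow_padicValNat_dvd
  · intro h
    have h1 : q^(v+1) ∣ q^k := pow_dvd_pow q hvk
    have h2 : q^(v+1) ∣ e := (Nat.dvd_add_right h1).mp h
    exact pv_not_dvd hq he h2

lemma pv_sub_pow {q : ℕ} (hq : 2 ≤ q) {e k : ℕ} (he : 0 < e) (hek : e < q^k) :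
    padicValNat q (q^k - e) = padicValNat q e := by
  set v := padicValNat q e with hv
  have hvk : v + 1 ≤ k := pv_lt_of_le hq he hek
  refine pv_eq' hq ?_ ?_
  · exact Nat.dvd_sub (pow_dvd_pow q (by omega)) pow_padicValNat_dvd
  · intro h
    have h1 : q^(v+1) ∣ q^k := pow_dvd_pow q hvk
    have h2 : q^(v+1) ∣ e := by
      have he' : e = q^k - (q^k - e) := by omega
      rw [he']
      exact Nat.dvd_sub h1 h
    exact pv_not_dvd hq he h2

lemma pv_le_self {q : ℕ} (hq : 2 ≤ q) {e : ℕ} (he : 0 < e) : padicValNat q e ≤ e := by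
  have h1 : q ^ padicValNat q e ∣ e := pow_padicValNat_dvd
  have h2 : q ^ padicValNat q e ≤ e := Nat.le_of_dvd he h1
  calc padicValNat q e ≤ 2 ^ padicValNat q e := Nat.le_of_lt Nat.lt_two_pow_self
    _ ≤ q ^ padicValNat q e := Nat.pow_le_pow_left hq _
    _ ≤ e := h2

lemma VqAA_le {i D j : ℕ} (m : ℕ) (hij : i ≤ j) (hj : j ≤ D) :
    VqAA i (m+j-i) ≤ ((D+1)*(m+1))^i := by
  unfold VqAA
  calc ∏ t ∈ Finset.range i, (m+j-i+t+1)
      ≤ ∏ _t ∈ Finset.range i, ((D+1)*(m+1)) := by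
        refine Finset.prod_le_prod (fun _ _ => Nat.zero_le _) (fun t ht => ?_)
        simp only [Finset.mem_range] at ht
        have h1 : m+j-i+t+1 ≤ m + D := by omega
        have h2 : m + D ≤ (D+1)*(m+1) := by nlinarith
        omega
    _ = ((D+1)*(m+1))^i := by rw [Finset.prod_const, Finset.card_range]

lemma VqAA_le' {i r D j : ℕ} (m : ℕ) (hi : i ≤ r) (hij : i ≤ j) (hj : j ≤ D) :
    VqAA i (m+j-i) ≤ (D+1)^r * (m+1)^r := by
  calc VqAA i (m+j-i) ≤ ((D+1)*(m+1))^i := VqAA_le m hij hj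
    _ = (D+1)^i * (m+1)^i := mul_pow _ _ _
    _ ≤ (D+1)^r * (m+1)^r :=
        Nat.mul_le_mul (Nat.pow_le_pow_right (by omega) hi) (Nat.pow_le_pow_right (by omega) hi)

lemma VqAA_mul_le {i r D j : ℕ} (m : ℕ) (hi : i < r) (hij : i ≤ j) (hj : j ≤ D) :
    VqAA i (m+j-i) * (m+1) ≤ (D+1)^r * (m+1)^r := by
  calc VqAA i (m+j-i) * (m+1) ≤ ((D+1)*(m+1))^i * (m+1) :=
        Nat.mul_le_mul_right _ (VqAA_le m hij hj)
    _ = (D+1)^i * (m+1)^(i+1) := by rw [mul_pow, pow_succ]; ring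
    _ ≤ (D+1)^r * (m+1)^r :=
        Nat.mul_le_mul (Nat.pow_le_pow_right (by omega) (by omega))
          (Nat.pow_le_pow_right (by omega) (by omega))

lemma VqAA_ge (i y m : ℕ) : (m+1)^i ≤ VqAA i (m+y) := by
  unfold VqAA
  calc (m+1)^i = ∏ _t ∈ Finset.range i, (m+1) := by
        rw [Finset.prod_const, Finset.card_range]
    _ ≤ ∏ t ∈ Finset.range i, (m+y+t+1) :=
        Finset.prod_le_prod (fun _ _ => Nat.zero_le _) (fun t _ => by omega)
lemma Vq_recurrence (r N : ℕ) (a : ℕ → Polynomial ℂ)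
    (hdeg : ∀ i ∈ Finset.range (r+1), (a i).natDegree ≤ N)
    (u : ℕ → ℂ)
    (hsum : ∑ i ∈ Finset.range (r + 1),
        ((a i : PowerSeries ℂ) *
          (⇑(PowerSeries.derivative ℂ))^[i] (PowerSeries.mk u)) = 0)
    (m : ℕ) :
    ∑ j ∈ Finset.range (N+r+1),
      (∑ i ∈ Finset.range (r+1),
        if i ≤ j ∧ j ≤ N + i then (a i).coeff (N+i-j) * (VqAA i (m+j-i) : ℂ) else 0)
        * u (m+j) = 0 := by
  have step : ∀ i ∈ Finset.range (r+1),
      ∑ k ∈ Finset.range (N+1), (a i).coeff k * ((VqAA i (m+N-k) : ℂ) * u (m+N-k+i))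
      = ∑ j ∈ Finset.range (N+r+1),
          (if i ≤ j ∧ j ≤ N+i then (a i).coeff (N+i-j) * (VqAA i (m+j-i) : ℂ) else 0)
            * u (m+j) := by
    intro i hi
    simp only [Finset.mem_range] at hi
    simp only [ite_mul, zero_mul]
    rw [← Finset.sum_filter]
    have hfil : (Finset.range (N+r+1)).filter (fun j => i ≤ j ∧ j ≤ N + i)
        = Finset.Icc i (N+i) := by
      ext j
      simp only [Finset.mem_filter, Finset.mem_range, Finset.mem_Icc]
      omega
    rw [hfil]
    refine Finset.sum_nbij' (fun k => N + i - k) (fun j => N + i - j) ?_ ?_ ?_ ?_ ?_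
    · intro k hk; simp only [Finset.mem_range] at hk; simp only [Finset.mem_Icc]; omega
    · intro j hj; simp only [Finset.mem_Icc] at hj; simp only [Finset.mem_range]; omega
    · intro k hk; simp only [Finset.mem_range] at hk; omega
    · intro j hj; simp only [Finset.mem_Icc] at hj; omega
    · intro k hk
      simp only [Finset.mem_range] at hk
      rw [show N + i - (N + i - k) = k by omega,
        show m + (N + i - k) - i = m + N - k by omega,
        show m + (N + i - k) = m + N - k + i by omega, mul_assoc]
  have h0 : (PowerSeries.coeff (m+N)) (∑ i ∈ Finset.range (r + 1),
      ((a i : PowerSeries ℂ) *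
        (⇑(PowerSeries.derivative ℂ))^[i] (PowerSeries.mk u))) = 0 := by
    rw [hsum]; simp
  rw [map_sum] at h0
  have expand : ∀ i ∈ Finset.range (r+1),
      (PowerSeries.coeff (m+N)) ((a i : PowerSeries ℂ) *
        (⇑(PowerSeries.derivative ℂ))^[i] (PowerSeries.mk u))
      = ∑ k ∈ Finset.range (N+1), (a i).coeff k * ((VqAA i (m+N-k) : ℂ) * u (m+N-k+i)) := by
    intro i hi
    simp only [Finset.mem_range] at hi
    rw [PowerSeries.coeff_mul, Finset.Nat.sum_antidiagonal_eq_sum_range_succ_mk]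
    simp only [Polynomial.coeff_coe, coeff_iter_deriv, PowerSeries.coeff_mk]
    refine (Finset.sum_subset (Finset.range_subset_range.2 (by omega : N+1 ≤ m+N+1)) ?_).symm
    intro k hk hnk
    simp only [Finset.mem_range] at hk hnk
    have hd : (a i).natDegree < k := by
      have := hdeg i (Finset.mem_range.2 hi)
      omega
    simp [Polynomial.coeff_eq_zero_of_natDegree_lt hd]
  calc ∑ j ∈ Finset.range (N+r+1),
        (∑ i ∈ Finset.range (r+1),
          if i ≤ j ∧ j ≤ N + i then (a i).coeff (N+i-j) * (VqAA i (m+j-i) : ℂ) else 0)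
          * u (m+j)
      = ∑ j ∈ Finset.range (N+r+1), ∑ i ∈ Finset.range (r+1),
          (if i ≤ j ∧ j ≤ N + i then (a i).coeff (N+i-j) * (VqAA i (m+j-i) : ℂ) else 0)
            * u (m+j) := by
        refine Finset.sum_congr rfl fun j _ => ?_
        rw [Finset.sum_mul]
    _ = ∑ i ∈ Finset.range (r+1), ∑ j ∈ Finset.range (N+r+1),
          (if i ≤ j ∧ j ≤ N + i then (a i).coeff (N+i-j) * (VqAA i (m+j-i) : ℂ) else 0)
            * u (m+j) := Finset.sum_comm
    _ = ∑ i ∈ Finset.range (r+1),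
          ∑ k ∈ Finset.range (N+1), (a i).coeff k * ((VqAA i (m+N-k) : ℂ) * u (m+N-k+i)) := by
        refine Finset.sum_congr rfl fun i hi => (step i hi).symm
    _ = ∑ i ∈ Finset.range (r+1),
          (PowerSeries.coeff (m+N)) ((a i : PowerSeries ℂ) *
            (⇑(PowerSeries.derivative ℂ))^[i] (PowerSeries.mk u)) := by
        refine Finset.sum_congr rfl fun i hi => (expand i hi).symm
    _ = 0 := h0
lemma Vq_claim2 (r N : ℕ) (a : ℕ → Polynomial ℂ) (j m : ℕ) (hj : j ≤ N + r) :
    ‖∑ i ∈ Finset.range (r+1),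
        if i ≤ j ∧ j ≤ N + i then (a i).coeff (N+i-j) * (VqAA i (m+j-i) : ℂ) else 0‖
      ≤ (∑ i ∈ Finset.range (r+1), ∑ k ∈ Finset.range (N+1), ‖(a i).coeff k‖)
          * (((N:ℝ)+r+1)^r * ((m:ℝ)+1)^r) := by
  calc ‖∑ i ∈ Finset.range (r+1),
        if i ≤ j ∧ j ≤ N + i then (a i).coeff (N+i-j) * (VqAA i (m+j-i) : ℂ) else 0‖
      ≤ ∑ i ∈ Finset.range (r+1),
        ‖if i ≤ j ∧ j ≤ N + i then (a i).coeff (N+i-j) * (VqAA i (m+j-i) : ℂ) else 0‖ :=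
        norm_sum_le _ _
    _ ≤ ∑ i ∈ Finset.range (r+1),
        (∑ k ∈ Finset.range (N+1), ‖(a i).coeff k‖) * (((N:ℝ)+r+1)^r * ((m:ℝ)+1)^r) := by
        refine Finset.sum_le_sum (fun i hi => ?_)
        simp only [Finset.mem_range] at hi
        by_cases hc : i ≤ j ∧ j ≤ N + i
        · rw [if_pos hc, norm_mul]
          have h1 : ‖(a i).coeff (N+i-j)‖ ≤ ∑ k ∈ Finset.range (N+1), ‖(a i).coeff k‖ :=
            Finset.single_le_sum (fun _ _ => norm_nonneg _)
              (Finset.mem_range.2 (by omega))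
          have h2 : ‖((VqAA i (m+j-i) : ℕ) : ℂ)‖ ≤ ((N:ℝ)+r+1)^r * ((m:ℝ)+1)^r := by
            rw [Complex.norm_natCast]
            have h3 := VqAA_le' (r := r) (D := N + r) m (by omega) hc.1 hj
            calc ((VqAA i (m+j-i) : ℕ) : ℝ) ≤ (((N+r+1)^r * (m+1)^r : ℕ) : ℝ) :=
                  Nat.cast_le.2 h3
              _ = ((N:ℝ)+r+1)^r * ((m:ℝ)+1)^r := by push_cast; ring
          exact mul_le_mul h1 h2 (norm_nonneg _) (by positivity)
        · rw [if_neg hc, norm_zero]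
          positivity
    _ = (∑ i ∈ Finset.range (r+1), ∑ k ∈ Finset.range (N+1), ‖(a i).coeff k‖)
          * (((N:ℝ)+r+1)^r * ((m:ℝ)+1)^r) := by
        rw [← Finset.sum_mul]
lemma Vq_stepC (r N j0 : ℕ) (a : ℕ → Polynomial ℂ) (m : ℕ) (hj0 : j0 ≤ N + r) :
    ‖∑ i ∈ Finset.range r,
        if i ≤ j0 ∧ j0 ≤ N + i then (a i).coeff (N+i-j0) * (VqAA i (m+j0-i) : ℂ) else 0‖
      * ((m:ℝ)+1)
    ≤ (∑ i ∈ Finset.range (r+1), ∑ k ∈ Finset.range (N+1), ‖(a i).coeff k‖)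
        * (((N:ℝ)+r+1)^r * ((m:ℝ)+1)^r) := by
  calc ‖∑ i ∈ Finset.range r,
        if i ≤ j0 ∧ j0 ≤ N + i then (a i).coeff (N+i-j0) * (VqAA i (m+j0-i) : ℂ) else 0‖
      * ((m:ℝ)+1)
      ≤ (∑ i ∈ Finset.range r,
          ‖if i ≤ j0 ∧ j0 ≤ N + i then (a i).coeff (N+i-j0) * (VqAA i (m+j0-i) : ℂ) else 0‖)
          * ((m:ℝ)+1) :=
        mul_le_mul_of_nonneg_right (norm_sum_le _ _) (by positivity)
    _ = ∑ i ∈ Finset.range r,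
          ‖if i ≤ j0 ∧ j0 ≤ N + i then (a i).coeff (N+i-j0) * (VqAA i (m+j0-i) : ℂ) else 0‖
            * ((m:ℝ)+1) := Finset.sum_mul _ _ _
    _ ≤ ∑ i ∈ Finset.range r,
          (∑ k ∈ Finset.range (N+1), ‖(a i).coeff k‖)
            * (((N:ℝ)+r+1)^r * ((m:ℝ)+1)^r) := by
        refine Finset.sum_le_sum (fun i hi => ?_)
        simp only [Finset.mem_range] at hi
        by_cases hc : i ≤ j0 ∧ j0 ≤ N + i
        · rw [if_pos hc, norm_mul, Complex.norm_natCast, mul_assoc]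
          have h1 : ‖(a i).coeff (N+i-j0)‖ ≤ ∑ k ∈ Finset.range (N+1), ‖(a i).coeff k‖ :=
            Finset.single_le_sum (fun _ _ => norm_nonneg _)
              (Finset.mem_range.2 (by omega))
          have h2 : ((VqAA i (m+j0-i) : ℕ) : ℝ) * ((m:ℝ)+1)
              ≤ ((N:ℝ)+r+1)^r * ((m:ℝ)+1)^r := by
            have h3 := VqAA_mul_le (r := r) (D := N + r) m hi hc.1 hj0
            calc ((VqAA i (m+j0-i) : ℕ) : ℝ) * ((m:ℝ)+1)
                = ((VqAA i (m+j0-i) * (m+1) : ℕ) : ℝ) := by push_cast; ring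
              _ ≤ (((N+r+1)^r * (m+1)^r : ℕ) : ℝ) := by exact_mod_cast h3
              _ = ((N:ℝ)+r+1)^r * ((m:ℝ)+1)^r := by push_cast; ring
          exact mul_le_mul h1 h2 (by positivity) (by positivity)
        · rw [if_neg hc, norm_zero, zero_mul]
          positivity
    _ ≤ (∑ i ∈ Finset.range (r+1), ∑ k ∈ Finset.range (N+1), ‖(a i).coeff k‖)
          * (((N:ℝ)+r+1)^r * ((m:ℝ)+1)^r) := by
        rw [Finset.sum_mul]
        refine Finset.sum_le_sum_of_subset_of_nonneg
          (Finset.range_subset_range.2 (by omega)) (fun i _ _ => by positivity)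

lemma Vq_claim3 (r N j0 : ℕ) (a : ℕ → Polynomial ℂ) (m : ℕ)
    (hδ : (a r).natDegree ≤ N) (hj0 : j0 = N + r - (a r).natDegree) :
    ‖(a r).coeff (a r).natDegree‖ * ((m:ℝ)+1)^(r+1)
      ≤ ‖∑ i ∈ Finset.range (r+1),
          if i ≤ j0 ∧ j0 ≤ N + i then (a i).coeff (N+i-j0) * (VqAA i (m+j0-i) : ℂ) else 0‖
            * ((m:ℝ)+1)
        + (∑ i ∈ Finset.range (r+1), ∑ k ∈ Finset.range (N+1), ‖(a i).coeff k‖)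
            * (((N:ℝ)+r+1)^r * ((m:ℝ)+1)^r) := by
  have hsplit : (∑ i ∈ Finset.range (r+1),
      if i ≤ j0 ∧ j0 ≤ N + i then (a i).coeff (N+i-j0) * (VqAA i (m+j0-i) : ℂ) else 0)
      = (∑ i ∈ Finset.range r,
          if i ≤ j0 ∧ j0 ≤ N + i then (a i).coeff (N+i-j0) * (VqAA i (m+j0-i) : ℂ) else 0)
        + (a r).coeff ((a r).natDegree) * (VqAA r (m+j0-r) : ℂ) := by
    rw [Finset.sum_range_succ]
    congr 1
    rw [if_pos ⟨by omega, by omega⟩, show N + r - j0 = (a r).natDegree by omega]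
  have stepA : ‖(a r).coeff ((a r).natDegree)‖ * ((m:ℝ)+1)^r
      ≤ ‖(a r).coeff ((a r).natDegree) * (VqAA r (m+j0-r) : ℂ)‖ := by
    rw [norm_mul, Complex.norm_natCast]
    refine mul_le_mul_of_nonneg_left ?_ (norm_nonneg _)
    have h1 := VqAA_ge r (j0 - r) m
    rw [show m + (j0 - r) = m + j0 - r by omega] at h1
    calc ((m:ℝ)+1)^r = (((m+1)^r : ℕ) : ℝ) := by push_cast; ring
      _ ≤ ((VqAA r (m+j0-r) : ℕ) : ℝ) := Nat.cast_le.2 h1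
  have stepB : ‖(a r).coeff ((a r).natDegree) * (VqAA r (m+j0-r) : ℂ)‖
      ≤ ‖∑ i ∈ Finset.range (r+1),
          if i ≤ j0 ∧ j0 ≤ N + i then (a i).coeff (N+i-j0) * (VqAA i (m+j0-i) : ℂ) else 0‖
        + ‖∑ i ∈ Finset.range r,
          if i ≤ j0 ∧ j0 ≤ N + i then (a i).coeff (N+i-j0) * (VqAA i (m+j0-i) : ℂ) else 0‖ := by
    have heq : (a r).coeff ((a r).natDegree) * (VqAA r (m+j0-r) : ℂ)
        = (∑ i ∈ Finset.range (r+1),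
            if i ≤ j0 ∧ j0 ≤ N + i then (a i).coeff (N+i-j0) * (VqAA i (m+j0-i) : ℂ) else 0)
          - (∑ i ∈ Finset.range r,
            if i ≤ j0 ∧ j0 ≤ N + i then (a i).coeff (N+i-j0) * (VqAA i (m+j0-i) : ℂ) else 0) := by
      rw [hsplit]; ring
    rw [heq]
    exact norm_sub_le _ _
  have stepC := Vq_stepC r N j0 a m (by omega)
  calc ‖(a r).coeff ((a r).natDegree)‖ * ((m:ℝ)+1)^(r+1)
      = (‖(a r).coeff ((a r).natDegree)‖ * ((m:ℝ)+1)^r) * ((m:ℝ)+1) := by ring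
    _ ≤ ‖(a r).coeff ((a r).natDegree) * (VqAA r (m+j0-r) : ℂ)‖ * ((m:ℝ)+1) :=
        mul_le_mul_of_nonneg_right stepA (by positivity)
    _ ≤ (‖∑ i ∈ Finset.range (r+1),
          if i ≤ j0 ∧ j0 ≤ N + i then (a i).coeff (N+i-j0) * (VqAA i (m+j0-i) : ℂ) else 0‖
        + ‖∑ i ∈ Finset.range r,
          if i ≤ j0 ∧ j0 ≤ N + i then (a i).coeff (N+i-j0) * (VqAA i (m+j0-i) : ℂ) else 0‖)
          * ((m:ℝ)+1) := mul_le_mul_of_nonneg_right stepB (by positivity)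
    _ = ‖∑ i ∈ Finset.range (r+1),
          if i ≤ j0 ∧ j0 ≤ N + i then (a i).coeff (N+i-j0) * (VqAA i (m+j0-i) : ℂ) else 0‖
          * ((m:ℝ)+1)
        + ‖∑ i ∈ Finset.range r,
          if i ≤ j0 ∧ j0 ≤ N + i then (a i).coeff (N+i-j0) * (VqAA i (m+j0-i) : ℂ) else 0‖
          * ((m:ℝ)+1) := by ring
    _ ≤ _ := add_le_add_right stepC _


set_option maxHeartbeats 2000000 in
/-- For every integer `q ≥ 2`, the formal power series
`V_q(X) = ∑_{n ≥ 1} ν_q(n) Xⁿ ∈ ℂ[[X]]` (where `ν_q(n)` is the largest `k` with `q^k ∣ n`)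
is not holonomic: there are no `r ≥ 0` and polynomials `a_0, …, a_r ∈ ℂ[X]` with `a_r ≠ 0` such
that `∑_{i=0}^{r} a_i(X) · V_q^{(i)}(X) = 0`. -/
theorem Vq_not_holonomic (q : ℕ) (hq : 2 ≤ q) :
    ¬ ∃ (r : ℕ) (a : ℕ → Polynomial ℂ), a r ≠ 0 ∧
      ∑ i ∈ Finset.range (r + 1),
        ((a i : PowerSeries ℂ) *
          (⇑(PowerSeries.derivative ℂ))^[i]
            (PowerSeries.mk fun n => (padicValNat q n : ℂ))) = 0 := by
  rintro ⟨r, a, har, hsum⟩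
  obtain ⟨N, hdeg⟩ : ∃ N, ∀ i ∈ Finset.range (r+1), (a i).natDegree ≤ N :=
    ⟨(Finset.range (r+1)).sup (fun i => (a i).natDegree), fun i hi => Finset.le_sup (f := fun i => (a i).natDegree) hi⟩
  have hrec := Vq_recurrence r N a hdeg (fun n => (padicValNat q n : ℂ)) hsum
  have hδN : (a r).natDegree ≤ N := hdeg r (Finset.self_mem_range_succ r)
  obtain ⟨j0, hj0⟩ : ∃ j0, j0 = N + r - (a r).natDegree := ⟨_, rfl⟩
  have hj0r : r ≤ j0 := by omega
  have hj0D : j0 ≤ N + r := by omega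
  -- positivity of the leading coefficient
  have hc : 0 < ‖(a r).coeff ((a r).natDegree)‖ := by
    have h1 : (a r).leadingCoeff ≠ 0 := Polynomial.leadingCoeff_ne_zero.mpr har
    rw [Polynomial.leadingCoeff] at h1
    exact norm_pos_iff.2 h1
  have hCt0 : (0:ℝ) ≤ ∑ i ∈ Finset.range (r+1), ∑ k ∈ Finset.range (N+1), ‖(a i).coeff k‖ :=
    Finset.sum_nonneg fun _ _ => Finset.sum_nonneg fun _ _ => norm_nonneg _
  -- choose the large parameter K
  obtain ⟨k1, hk1⟩ := exists_nat_gt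
    ((2 * (((N:ℝ)+r) * ((N:ℝ)+r) *
      ((∑ i ∈ Finset.range (r+1), ∑ k ∈ Finset.range (N+1), ‖(a i).coeff k‖)
        * ((N:ℝ)+r+1)^r))) / ‖(a r).coeff ((a r).natDegree)‖)
  obtain ⟨k2, hk2⟩ := exists_nat_gt
    ((2 * ((∑ i ∈ Finset.range (r+1), ∑ k ∈ Finset.range (N+1), ‖(a i).coeff k‖)
        * ((N:ℝ)+r+1)^r)) / ‖(a r).coeff ((a r).natDegree)‖)
  obtain ⟨K, hK⟩ : ∃ K, K = (N + r) + j0 + 1 + k1 + k2 := ⟨_, rfl⟩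
  have hKbig : K < q^K := Nat.lt_pow_self (by omega : 1 < q)
  obtain ⟨m, hm⟩ : ∃ m, m = q^K - j0 := ⟨_, rfl⟩
  have hmj0 : m + j0 = q^K := by omega
  -- evaluation of the valuation at m + j
  have hval : ∀ j, j ≤ N + r →
      ((padicValNat q (m+j) : ℕ) : ℂ)
        = if j = j0 then ((K:ℕ) : ℂ)
          else ((padicValNat q (if j0 ≤ j then j - j0 else j0 - j) : ℕ) : ℂ) := by
    intro j hj
    by_cases hjj : j = j0
    · subst hjj
      rw [if_pos rfl, show m + j = q^K by omega, pv_pow hq]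
    · rw [if_neg hjj]
      by_cases hle : j0 ≤ j
      · rw [if_pos hle]
        have h1 : m + j = q^K + (j - j0) := by omega
        rw [h1, pv_add_pow hq (by omega) (by omega)]
      · rw [if_neg hle]
        have h1 : m + j = q^K - (j0 - j) := by omega
        rw [h1, pv_sub_pow hq (by omega) (by omega)]
  -- the recurrence at m, with values substituted
  have heq1 : ∑ j ∈ Finset.range (N+r+1),
      (∑ i ∈ Finset.range (r+1),
        if i ≤ j ∧ j ≤ N + i then (a i).coeff (N+i-j) * (VqAA i (m+j-i) : ℂ) else 0)
      * (if j = j0 then ((K:ℕ) : ℂ)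
          else ((padicValNat q (if j0 ≤ j then j - j0 else j0 - j) : ℕ) : ℂ)) = 0 := by
    refine Eq.trans (Finset.sum_congr rfl fun j hj => ?_) (hrec m)
    simp only [Finset.mem_range] at hj
    exact congrArg _ ((hval j (by omega)).symm)
  have hj0mem : j0 ∈ Finset.range (N+r+1) := Finset.mem_range.2 (by omega)
  rw [← Finset.add_sum_erase _ _ hj0mem, if_pos rfl] at heq1
  -- norm bound on the sum over the erased set
  have hGK : ‖∑ i ∈ Finset.range (r+1),
        if i ≤ j0 ∧ j0 ≤ N + i then (a i).coeff (N+i-j0) * (VqAA i (m+j0-i) : ℂ) else 0‖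
      * ((K:ℕ) : ℝ)
      ≤ ((N:ℝ)+r) * ((∑ i ∈ Finset.range (r+1), ∑ k ∈ Finset.range (N+1), ‖(a i).coeff k‖)
          * (((N:ℝ)+r+1)^r * ((m:ℝ)+1)^r) * ((N:ℝ)+r)) := by
    have hneg : (∑ i ∈ Finset.range (r+1),
        if i ≤ j0 ∧ j0 ≤ N + i then (a i).coeff (N+i-j0) * (VqAA i (m+j0-i) : ℂ) else 0)
        * ((K:ℕ) : ℂ)
        = - ∑ j ∈ (Finset.range (N+r+1)).erase j0,
            (∑ i ∈ Finset.range (r+1),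
              if i ≤ j ∧ j ≤ N + i then (a i).coeff (N+i-j) * (VqAA i (m+j-i) : ℂ) else 0)
            * (if j = j0 then ((K:ℕ) : ℂ)
                else ((padicValNat q (if j0 ≤ j then j - j0 else j0 - j) : ℕ) : ℂ)) := by
      exact eq_neg_of_add_eq_zero_left heq1
    calc ‖∑ i ∈ Finset.range (r+1),
          if i ≤ j0 ∧ j0 ≤ N + i then (a i).coeff (N+i-j0) * (VqAA i (m+j0-i) : ℂ) else 0‖
        * ((K:ℕ) : ℝ)
        = ‖(∑ i ∈ Finset.range (r+1),
            if i ≤ j0 ∧ j0 ≤ N + i then (a i).coeff (N+i-j0) * (VqAA i (m+j0-i) : ℂ) else 0)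
            * ((K:ℕ) : ℂ)‖ := by rw [norm_mul, Complex.norm_natCast]
      _ = ‖∑ j ∈ (Finset.range (N+r+1)).erase j0,
            (∑ i ∈ Finset.range (r+1),
              if i ≤ j ∧ j ≤ N + i then (a i).coeff (N+i-j) * (VqAA i (m+j-i) : ℂ) else 0)
            * (if j = j0 then ((K:ℕ) : ℂ)
                else ((padicValNat q (if j0 ≤ j then j - j0 else j0 - j) : ℕ) : ℂ))‖ := by
          rw [hneg, norm_neg]
      _ ≤ ∑ j ∈ (Finset.range (N+r+1)).erase j0,
            ‖(∑ i ∈ Finset.range (r+1),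
              if i ≤ j ∧ j ≤ N + i then (a i).coeff (N+i-j) * (VqAA i (m+j-i) : ℂ) else 0)
            * (if j = j0 then ((K:ℕ) : ℂ)
                else ((padicValNat q (if j0 ≤ j then j - j0 else j0 - j) : ℕ) : ℂ))‖ :=
          norm_sum_le _ _
      _ ≤ ((Finset.range (N+r+1)).erase j0).card •
            ((∑ i ∈ Finset.range (r+1), ∑ k ∈ Finset.range (N+1), ‖(a i).coeff k‖)
              * (((N:ℝ)+r+1)^r * ((m:ℝ)+1)^r) * ((N:ℝ)+r)) := by
          refine Finset.sum_le_card_nsmul _ _ _ (fun j hj => ?_)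
          have hjne : j ≠ j0 := Finset.ne_of_mem_erase hj
          have hjr : j < N+r+1 := Finset.mem_range.1 (Finset.mem_of_mem_erase hj)
          rw [norm_mul, if_neg hjne, Complex.norm_natCast]
          have hw : ((padicValNat q (if j0 ≤ j then j - j0 else j0 - j) : ℕ) : ℝ)
              ≤ ((N:ℝ)+r) := by
            have he1 : 0 < (if j0 ≤ j then j - j0 else j0 - j) := by split <;> omega
            have he2 : (if j0 ≤ j then j - j0 else j0 - j) ≤ N + r := by split <;> omega
            have h3 := le_trans (pv_le_self hq he1) he2
            exact_mod_cast h3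
          exact mul_le_mul (Vq_claim2 r N a j m (by omega)) hw (by positivity)
            (by positivity)
      _ = ((N:ℝ)+r) * ((∑ i ∈ Finset.range (r+1), ∑ k ∈ Finset.range (N+1), ‖(a i).coeff k‖)
            * (((N:ℝ)+r+1)^r * ((m:ℝ)+1)^r) * ((N:ℝ)+r)) := by
          rw [Finset.card_erase_of_mem hj0mem, Finset.card_range, nsmul_eq_mul]
          push_cast
          ring
  -- the lower bound from claim 3
  have hC3 := Vq_claim3 r N j0 a m hδN hj0
  -- final numeric contradiction
  have hXpos : (0:ℝ) < (m:ℝ)+1 := by positivity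
  have hYpos : (0:ℝ) < ((m:ℝ)+1)^r := by positivity
  have hKpos : (0:ℝ) < ((K:ℕ):ℝ) := by
    have : 0 < K := by omega
    exact_mod_cast this
  have hKk1 : (k1:ℝ) ≤ ((K:ℕ):ℝ) := by
    have : k1 ≤ K := by omega
    exact_mod_cast this
  have hmk2 : (k2:ℝ) ≤ (m:ℝ)+1 := by
    have : k2 ≤ m + 1 := by omega
    exact_mod_cast this
  have h3 : 2 * (((N:ℝ)+r) * ((N:ℝ)+r) *
      ((∑ i ∈ Finset.range (r+1), ∑ k ∈ Finset.range (N+1), ‖(a i).coeff k‖)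
        * ((N:ℝ)+r+1)^r))
      < ((K:ℕ):ℝ) * ‖(a r).coeff ((a r).natDegree)‖ := by
    rw [div_lt_iff₀ hc] at hk1
    have := mul_le_mul_of_nonneg_right hKk1 hc.le
    linarith
  have h4 : 2 * ((∑ i ∈ Finset.range (r+1), ∑ k ∈ Finset.range (N+1), ‖(a i).coeff k‖)
        * ((N:ℝ)+r+1)^r)
      < ‖(a r).coeff ((a r).natDegree)‖ * ((m:ℝ)+1) := by
    rw [div_lt_iff₀ hc] at hk2
    have := mul_le_mul_of_nonneg_left hmk2 hc.le
    linarith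
  have s1 := mul_le_mul_of_nonneg_left hC3 hKpos.le
  have s2 := mul_le_mul_of_nonneg_right hGK hXpos.le
  have t3 := mul_lt_mul_of_pos_right h3 (mul_pos hYpos hXpos)
  have t4 := mul_lt_mul_of_pos_right h4 (mul_pos hKpos hYpos)
  have hps : ((m:ℝ)+1)^(r+1) = ((m:ℝ)+1)^r * ((m:ℝ)+1) := pow_succ _ _
  rw [hps] at s1
  linarith [s1, s2, t3, t4]
end

section
/- For every integer q ≥ 2, the sequence {ν_q(n)}_{n≥1} is not holonomic; that is, there do not exist an integer r ≥ 0 and polynomials a_0(X), a_1(X), …, a_r(X) ∈ ℂ[X] with a_r(X) not identically zero such that a_r(n)·ν_q(n+r) + a_{r-1}(n)·ν_q(n+r-1) + ⋯ + a_0(n)·ν_q(n) = 0 for all n ≥ 1. -/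
open Polynomial

private lemma val_eq_of_dvd {q : ℕ} (hq : 2 ≤ q) {n k : ℕ} (hn : 0 < n)
    (h1 : q ^ k ∣ n) (h2 : ¬ q ^ (k + 1) ∣ n) : padicValNat q n = k := by
  have e1 := (Nat.pow_dvd_iff_le_padicValNat (show q ≠ 1 by omega) (show n ≠ 0 by omega)).mp h1
  have e2 : ¬ k + 1 ≤ padicValNat q n := fun h =>
    h2 ((Nat.pow_dvd_iff_le_padicValNat (show q ≠ 1 by omega) (show n ≠ 0 by omega)).mpr h)
  omega

private lemma not_dvd_succ_val {q : ℕ} (hq : 2 ≤ q) {j : ℕ} (hj : 0 < j) :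
    ¬ q ^ (padicValNat q j + 1) ∣ j := by
  intro h
  have hle := (Nat.pow_dvd_iff_le_padicValNat (show q ≠ 1 by omega) (show j ≠ 0 by omega)).mp h
  omega

private lemma val_lt_of_lt {q : ℕ} (hq : 2 ≤ q) {x M : ℕ} (hx : 0 < x) (hxM : x < q ^ M) :
    padicValNat q x < M := by
  have h1 : q ^ padicValNat q x ≤ x := Nat.le_of_dvd hx pow_padicValNat_dvd
  exact (Nat.pow_lt_pow_iff_right (by omega)).mp (lt_of_le_of_lt h1 hxM)

/-- Adding a multiple of `q^M` does not change the valuation, if it is `< M`. -/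
private lemma val_add_mul_pow {q : ℕ} (hq : 2 ≤ q) {x M t : ℕ} (hx : 0 < x)
    (hM : padicValNat q x < M) : padicValNat q (x + t * q ^ M) = padicValNat q x := by
  set k := padicValNat q x with hk
  apply val_eq_of_dvd hq (by positivity)
  · exact Nat.dvd_add pow_padicValNat_dvd
      (Dvd.dvd.mul_left (pow_dvd_pow q (le_of_lt hM)) t)
  · intro h
    have h2 : q ^ (k + 1) ∣ t * q ^ M := Dvd.dvd.mul_left (pow_dvd_pow q (by omega)) t
    have h3 : q ^ (k + 1) ∣ x := by
      have h4 := Nat.dvd_sub h h2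
      rwa [Nat.add_sub_cancel] at h4
    exact not_dvd_succ_val hq hx h3

private lemma pow_lt_pow_succ' {q : ℕ} (hq : 2 ≤ q) (m : ℕ) : q ^ m < q ^ (m + 1) := by
  rw [pow_succ]
  nlinarith [pow_pos (show 0 < q by omega) m]

private lemma val_pow_self {q : ℕ} (hq : 2 ≤ q) (m : ℕ) : padicValNat q (q ^ m) = m := by
  apply val_eq_of_dvd hq (by positivity) dvd_rfl
  intro h
  have := Nat.le_of_dvd (by positivity) h
  have := pow_lt_pow_succ' hq m
  omega

private lemma val_pow_sub {q : ℕ} (hq : 2 ≤ q) {m j : ℕ} (hj : 0 < j) (hjm : j < q ^ m) :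
    padicValNat q (q ^ m - j) = padicValNat q j := by
  set k := padicValNat q j with hk
  have hkm : k < m := val_lt_of_lt hq hj hjm
  apply val_eq_of_dvd hq (by omega)
  · exact Nat.dvd_sub (pow_dvd_pow q (le_of_lt hkm)) pow_padicValNat_dvd
  · intro h
    have h2 : q ^ (k + 1) ∣ q ^ m := pow_dvd_pow q (by omega)
    have h3 : q ^ (k + 1) ∣ j := by
      have := Nat.dvd_sub h2 h
      rwa [Nat.sub_sub_self (le_of_lt hjm)] at this
    exact not_dvd_succ_val hq hj h3

/-- For every integer `q ≥ 2`, the sequence `{ν_q(n)}_{n ≥ 1}` (where `ν_q(n)`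
is the largest `k` with `q^k ∣ n`) is not holonomic: there are no `r ≥ 0` and polynomials
`a_0, …, a_r ∈ ℂ[X]` with `a_r ≠ 0` such that
`a_r(n)·ν_q(n+r) + ⋯ + a_0(n)·ν_q(n) = 0` for all `n ≥ 1`. -/
theorem nuq_not_holonomic (q : ℕ) (hq : 2 ≤ q) :
    ¬ ∃ (r : ℕ) (a : ℕ → Polynomial ℂ), a r ≠ 0 ∧
      ∀ n : ℕ, 1 ≤ n →
        ∑ i ∈ Finset.range (r + 1),
          (a i).eval (n : ℂ) * (padicValNat q (n + i) : ℂ) = 0 := by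
  rintro ⟨r, a, har, hrec⟩
  -- Key: for each m with r < q^m, a polynomial identity
  have hB : ∀ m : ℕ, r < q ^ m →
      ∑ i ∈ Finset.range (r + 1),
        Polynomial.C ((padicValNat q (q ^ m - r + i) : ℂ)) * a i = 0 := by
    intro m hm
    apply Polynomial.eq_zero_of_infinite_isRoot
    apply Set.infinite_of_injective_forall_mem
      (f := fun t : ℕ => ((q ^ m - r + t * q ^ (m + 1) : ℕ) : ℂ))
    · intro t s hts
      have h1 : (q ^ m - r + t * q ^ (m + 1) : ℕ) = q ^ m - r + s * q ^ (m + 1) :=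
        Nat.cast_injective hts
      have h2 : t * q ^ (m + 1) = s * q ^ (m + 1) := by omega
      exact Nat.eq_of_mul_eq_mul_right (by positivity) h2
    · intro t
      set n : ℕ := q ^ m - r + t * q ^ (m + 1) with hn
      have hn1 : 1 ≤ n := by
        have : 1 ≤ q ^ m - r := by omega
        omega
      have hval : ∀ i ∈ Finset.range (r + 1),
          padicValNat q (n + i) = padicValNat q (q ^ m - r + i) := by
        intro i hi
        simp only [Finset.mem_range] at hi
        have hx : 0 < q ^ m - r + i := by omega
        have hxlt : q ^ m - r + i < q ^ (m + 1) := by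
          have h2 : q ^ m < q ^ (m + 1) := pow_lt_pow_succ' hq m
          omega
        have heq : n + i = (q ^ m - r + i) + t * q ^ (m + 1) := by omega
        rw [heq, val_add_mul_pow hq hx (val_lt_of_lt hq hx hxlt)]
      have h0 := hrec n hn1
      simp only [Polynomial.IsRoot, Polynomial.eval_finset_sum, Polynomial.eval_mul,
        Polynomial.eval_C]
      rw [← h0]
      apply Finset.sum_congr rfl
      intro i hi
      rw [hval i hi, mul_comm]
  -- now subtract identities at m and m+1
  set m : ℕ := r + 1 with hm
  have hrm : r < q ^ m := by
    have h1 : r < 2 ^ m :=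
      lt_of_lt_of_le ((Nat.lt_two_pow_self (n := r))) (Nat.pow_le_pow_right (by omega) (Nat.le_succ r))
    exact lt_of_lt_of_le h1 (Nat.pow_le_pow_left hq m)
  have hrm' : r < q ^ (m + 1) :=
    lt_of_lt_of_le hrm (Nat.pow_le_pow_right (by omega) (Nat.le_succ m))
  have h3 := hB m hrm
  have h4 := hB (m + 1) hrm'
  apply har
  have key : (∑ i ∈ Finset.range (r + 1),
        Polynomial.C ((padicValNat q (q ^ (m + 1) - r + i) : ℂ)) * a i)
      - (∑ i ∈ Finset.range (r + 1),
        Polynomial.C ((padicValNat q (q ^ m - r + i) : ℂ)) * a i) = a r := by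
    rw [← Finset.sum_sub_distrib]
    rw [Finset.sum_range_succ]
    have hzero : ∀ i ∈ Finset.range r,
        Polynomial.C ((padicValNat q (q ^ (m + 1) - r + i) : ℂ)) * a i
          - Polynomial.C ((padicValNat q (q ^ m - r + i) : ℂ)) * a i = 0 := by
      intro i hi
      simp only [Finset.mem_range] at hi
      have e1 : q ^ (m + 1) - r + i = q ^ (m + 1) - (r - i) := by omega
      have e2 : q ^ m - r + i = q ^ m - (r - i) := by omega
      rw [e1, e2, val_pow_sub hq (by omega) (by omega), val_pow_sub hq (by omega) (by omega)]
      ring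
    rw [Finset.sum_eq_zero hzero, zero_add]
    have e1 : q ^ (m + 1) - r + r = q ^ (m + 1) := by omega
    have e2 : q ^ m - r + r = q ^ m := by omega
    rw [e1, e2, val_pow_self hq, val_pow_self hq, ← sub_mul, ← Polynomial.C_sub]
    have hone : ((↑(m + 1) : ℂ) - ↑m) = 1 := by push_cast; ring
    rw [hone, Polynomial.C_1, one_mul]
  rw [h3, h4, sub_zero] at key
  exact key.symm
end

section
/- For all integers q ≥ 2 and k ≥ 2, the sequence {ν_q(n) mod k}_{n≥1} is not holonomic; that is, there do not exist an integer r ≥ 0 and polynomials a_0(X), a_1(X), …, a_r(X) ∈ ℂ[X] with a_r(X) not identically zero such that a_r(n)·(ν_q(n+r) mod k) + a_{r-1}(n)·(ν_q(n+r-1) mod k) + ⋯ + a_0(n)·(ν_q(n) mod k) = 0 for all n ≥ 1. -/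
lemma padicValNat_eq_of_dvd_of_not_dvd {q n v : ℕ} (hq : 2 ≤ q) (hn : 0 < n)
    (h1 : q ^ v ∣ n) (h2 : ¬ q ^ (v + 1) ∣ n) : padicValNat q n = v := by
  rw [padicValNat_def' (by omega) hn.ne']
  exact multiplicity_eq_of_dvd_of_not_dvd h1 h2

lemma padicValNat_self_pow {q : ℕ} (hq : 2 ≤ q) (N : ℕ) : padicValNat q (q ^ N) = N := by
  refine padicValNat_eq_of_dvd_of_not_dvd hq (Nat.pow_pos (by omega)) dvd_rfl ?_
  intro h
  have := Nat.le_of_dvd (Nat.pow_pos (by omega)) h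
  exact absurd this (by
    exact Nat.not_le_of_lt (Nat.pow_lt_pow_right (by omega) (by omega)))

lemma padicValNat_pow_sub {q N j : ℕ} (hq : 2 ≤ q) (hj : 0 < j)
    (hvN : padicValNat q j < N) (hjN : j < q ^ N) :
    padicValNat q (q ^ N - j) = padicValNat q j := by
  set v := padicValNat q j with hv
  have hfin : FiniteMultiplicity q j := Nat.finiteMultiplicity_iff.2 ⟨by omega, hj⟩
  have hmul : multiplicity q j = v := (padicValNat_def' (by omega) hj.ne').symm
  have hdvd : q ^ v ∣ j := pow_padicValNat_dvd
  have hnot : ¬ q ^ (v + 1) ∣ j := by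
    intro h
    have h' := hfin.pow_dvd_iff_le_multiplicity.1 h
    rw [hmul] at h'
    omega
  refine padicValNat_eq_of_dvd_of_not_dvd hq (Nat.sub_pos_of_lt hjN) ?_ ?_
  · exact Nat.dvd_sub (pow_dvd_pow q (le_of_lt hvN)) hdvd
  · intro h
    have h1 : q ^ (v + 1) ∣ q ^ N := pow_dvd_pow q (by omega)
    have h2 : q ^ (v + 1) ∣ q ^ N - (q ^ N - j) := Nat.dvd_sub h1 h
    rw [Nat.sub_sub_self (le_of_lt hjN)] at h2
    exact hnot h2

lemma padicValNat_lt_self {q j : ℕ} (hq : 2 ≤ q) (hj : 0 < j) : padicValNat q j < j := by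
  have h1 : q ^ padicValNat q j ∣ j := pow_padicValNat_dvd
  have h2 : q ^ padicValNat q j ≤ j := Nat.le_of_dvd hj h1
  have h3 : padicValNat q j < 2 ^ padicValNat q j := Nat.lt_two_pow_self
  have h4 : 2 ^ padicValNat q j ≤ q ^ padicValNat q j :=
    Nat.pow_le_pow_left (by omega) _
  omega

/-- For all integers `q ≥ 2` and `k ≥ 2`, the sequence
`{ν_q(n) mod k}_{n ≥ 1}` is not holonomic: there are no `r ≥ 0` and polynomials
`a_0, …, a_r ∈ ℂ[X]` with `a_r ≠ 0` such that
`a_r(n)·(ν_q(n+r) mod k) + ⋯ + a_0(n)·(ν_q(n) mod k) = 0` for all `n ≥ 1`. -/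
theorem nuqk_not_holonomic (q k : ℕ) (hq : 2 ≤ q) (hk : 2 ≤ k) :
    ¬ ∃ (r : ℕ) (a : ℕ → Polynomial ℂ), a r ≠ 0 ∧
      ∀ n : ℕ, 1 ≤ n →
        ∑ i ∈ Finset.range (r + 1),
          (a i).eval (n : ℂ) * ((padicValNat q (n + i) % k : ℕ) : ℂ) = 0 := by
  rintro ⟨r, a, har, hA⟩
  have hrpow : ∀ N : ℕ, r < N → r < q ^ N := fun N hN =>
    hN.trans (Nat.lt_pow_self (n := N) (by omega))
  set b : ℕ → ℂ := fun i => ((padicValNat q (r - i) % k : ℕ) : ℂ) with hb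
  set P : Polynomial ℂ := ∑ i ∈ Finset.range r, a i * Polynomial.C (b i) with hP
  have key : ∀ N : ℕ, r < N → P.eval ((q ^ N - r : ℕ) : ℂ)
      + (a r).eval ((q ^ N - r : ℕ) : ℂ) * ((N % k : ℕ) : ℂ) = 0 := by
    intro N hN
    have hqN : r < q ^ N := hrpow N hN
    set n := q ^ N - r with hn
    have hn1 : 1 ≤ n := by omega
    have hnr : n + r = q ^ N := by omega
    have h0 := hA n hn1
    rw [Finset.sum_range_succ] at h0
    have hlast : padicValNat q (n + r) = N := by rw [hnr]; exact padicValNat_self_pow hq N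
    have hmid : ∀ i ∈ Finset.range r,
        (a i).eval (n : ℂ) * ((padicValNat q (n + i) % k : ℕ) : ℂ)
          = (a i).eval (n : ℂ) * b i := by
      intro i hi
      rw [Finset.mem_range] at hi
      have hji : n + i = q ^ N - (r - i) := by omega
      have hj0 : 0 < r - i := by omega
      have hv : padicValNat q (r - i) < N := by
        have := padicValNat_lt_self hq hj0
        omega
      have hval : padicValNat q (n + i) = padicValNat q (r - i) := by
        rw [hji]; exact padicValNat_pow_sub hq hj0 hv (by omega)
      rw [hval]
    rw [Finset.sum_congr rfl hmid, hlast] at h0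
    have hPeval : P.eval (n : ℂ) = ∑ i ∈ Finset.range r, (a i).eval (n : ℂ) * b i := by
      simp [hP, Polynomial.eval_finset_sum]
    rw [hPeval]
    exact h0
  have hP0 : P = 0 := by
    apply Polynomial.eq_zero_of_infinite_isRoot
    apply Set.infinite_of_injective_forall_mem
      (f := fun m : ℕ => ((q ^ ((m + r + 1) * k) - r : ℕ) : ℂ))
    · intro m1 m2 h
      have h'' : ((q ^ ((m1 + r + 1) * k) - r : ℕ) : ℂ) = ((q ^ ((m2 + r + 1) * k) - r : ℕ) : ℂ) := h
      have h' : q ^ ((m1 + r + 1) * k) - r = q ^ ((m2 + r + 1) * k) - r := by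
        exact_mod_cast h''
      by_contra hne
      wlog hlt : m1 < m2 generalizing m1 m2
      · exact this h.symm h''.symm h'.symm (Ne.symm hne) (by omega)
      have h1 : (m1 + r + 1) * k < (m2 + r + 1) * k :=
        (Nat.mul_lt_mul_right (by omega)).2 (by omega)
      have h2 : q ^ ((m1 + r + 1) * k) < q ^ ((m2 + r + 1) * k) :=
        Nat.pow_lt_pow_right (by omega) h1
      have h3 : r < q ^ ((m1 + r + 1) * k) := hrpow _ (by nlinarith)
      omega
    · intro m
      have hN : r < (m + r + 1) * k := by nlinarith
      have := key ((m + r + 1) * k) hN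
      have hmod : (m + r + 1) * k % k = 0 := Nat.mul_mod_left _ _
      rw [hmod] at this
      simpa [Polynomial.IsRoot] using this
  have hP1 : P + a r = 0 := by
    apply Polynomial.eq_zero_of_infinite_isRoot
    apply Set.infinite_of_injective_forall_mem
      (f := fun m : ℕ => ((q ^ ((m + r + 1) * k + 1) - r : ℕ) : ℂ))
    · intro m1 m2 h
      have h'' : ((q ^ ((m1 + r + 1) * k + 1) - r : ℕ) : ℂ) = ((q ^ ((m2 + r + 1) * k + 1) - r : ℕ) : ℂ) := h
      have h' : q ^ ((m1 + r + 1) * k + 1) - r = q ^ ((m2 + r + 1) * k + 1) - r := by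
        exact_mod_cast h''
      by_contra hne
      wlog hlt : m1 < m2 generalizing m1 m2
      · exact this h.symm h''.symm h'.symm (Ne.symm hne) (by omega)
      have h1 : (m1 + r + 1) * k + 1 < (m2 + r + 1) * k + 1 := by
        have : (m1 + r + 1) * k < (m2 + r + 1) * k :=
          (Nat.mul_lt_mul_right (by omega)).2 (by omega)
        omega
      have h2 : q ^ ((m1 + r + 1) * k + 1) < q ^ ((m2 + r + 1) * k + 1) :=
        Nat.pow_lt_pow_right (by omega) h1
      have h3 : r < q ^ ((m1 + r + 1) * k + 1) := hrpow _ (by nlinarith)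
      omega
    · intro m
      have hN : r < (m + r + 1) * k + 1 := by nlinarith
      have hkey := key ((m + r + 1) * k + 1) hN
      have hmod : ((m + r + 1) * k + 1) % k = 1 := by
        rw [Nat.add_comm, Nat.add_mul_mod_self_right]
        exact Nat.mod_eq_of_lt (by omega)
      rw [hmod] at hkey
      simpa [Polynomial.IsRoot] using hkey
  apply har
  have : a r = (P + a r) - P := by ring
  rw [this, hP1, hP0]
  simp
end

section
/- Let q ≥ 2 be an integer and let A be a subfield of ℂ all of whose elements are algebraic over ℚ. Then the formal power series V_q(X) = ∑_{n≥1} ν_q(n) X^n, viewed as an element of A[[X]], is not algebraic over the field of rational functions A(X); that is, there do not exist an integer r ≥ 1 and polynomials g_0(X), g_1(X), …, g_r(X) ∈ A[X] with g_r ≠ 0 such that g_r(X)·V_q(X)^r + g_{r-1}(X)·V_q(X)^{r-1} + ⋯ + g_1(X)·V_q(X) + g_0(X) = 0 in A[[X]]. -/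
open Filter Topology PowerSeries Finset

noncomputable section VqAux

/-- divisibility by powers characterizes padicValNat -/
lemma vq_pow_dvd_iff {q n j : ℕ} (hq : 2 ≤ q) (hn : n ≠ 0) :
    q ^ j ∣ n ↔ j ≤ padicValNat q n := by
  rw [padicValNat_def' (by omega) hn]
  exact (Nat.finiteMultiplicity_iff.2 ⟨by omega, Nat.pos_of_ne_zero hn⟩).pow_dvd_iff_le_multiplicity

lemma vq_le_self {q n : ℕ} (hq : 2 ≤ q) : padicValNat q n ≤ n := by
  rcases eq_or_ne n 0 with rfl | hn
  · simp
  · have h1 : q ^ padicValNat q n ∣ n := pow_padicValNat_dvd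
    have h2 : q ^ padicValNat q n ≤ n := Nat.le_of_dvd (Nat.pos_of_ne_zero hn) h1
    have h3 : padicValNat q n < q ^ padicValNat q n := Nat.lt_pow_self (by omega)
    omega

section Eval

variable (z : ℂ)

/-- Goodness: absolute convergence of the evaluated power series at `z`. -/
def Gd (F : PowerSeries ℂ) : Prop := Summable fun n => ‖PowerSeries.coeff n F * z ^ n‖

/-- Evaluation of a power series at `z`. -/
def ev (F : PowerSeries ℂ) : ℂ := ∑' n, PowerSeries.coeff n F * z ^ n

variable {z}

lemma gd_key (F G : PowerSeries ℂ) (n : ℕ) :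
    PowerSeries.coeff n (F * G) * z ^ n =
      ∑ kl ∈ Finset.HasAntidiagonal.antidiagonal n,
        (PowerSeries.coeff kl.1 F * z ^ kl.1) * (PowerSeries.coeff kl.2 G * z ^ kl.2) := by
  rw [PowerSeries.coeff_mul, Finset.sum_mul]
  refine Finset.sum_congr rfl fun kl hkl => ?_
  rw [Finset.HasAntidiagonal.mem_antidiagonal] at hkl
  rw [← hkl, pow_add]; ring

lemma Gd.mul {F G : PowerSeries ℂ} (hF : Gd z F) (hG : Gd z G) : Gd z (F * G) := by
  have := summable_norm_sum_mul_antidiagonal_of_summable_norm hF hG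
  unfold Gd
  simpa only [← gd_key] using this

lemma ev_mul {F G : PowerSeries ℂ} (hF : Gd z F) (hG : Gd z G) :
    ev z (F * G) = ev z F * ev z G := by
  unfold ev
  rw [tsum_mul_tsum_eq_tsum_sum_antidiagonal_of_summable_norm hF hG]
  exact tsum_congr fun n => (gd_key F G n)

lemma Gd.one : Gd z 1 := by
  apply summable_of_ne_finset_zero (s := {0})
  intro n hn
  simp only [Finset.mem_singleton] at hn
  simp [PowerSeries.coeff_one, hn]

lemma ev_one : ev z 1 = 1 := by
  unfold ev
  rw [tsum_eq_single 0 (fun n hn => by simp [PowerSeries.coeff_one, hn])]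
  simp

lemma Gd.pow {F : PowerSeries ℂ} (hF : Gd z F) : ∀ i : ℕ, Gd z (F ^ i)
  | 0 => by simpa using Gd.one
  | (i+1) => by rw [pow_succ]; exact (Gd.pow hF i).mul hF

lemma ev_pow {F : PowerSeries ℂ} (hF : Gd z F) : ∀ i : ℕ, ev z (F ^ i) = ev z F ^ i
  | 0 => by simpa using ev_one
  | (i+1) => by
      rw [pow_succ, ev_mul (hF.pow i) hF, ev_pow hF i, pow_succ]

lemma Gd.poly (g : Polynomial ℂ) : Gd z (g : PowerSeries ℂ) := by
  apply summable_of_ne_finset_zero (s := Finset.range (g.natDegree + 1))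
  intro n hn
  rw [Finset.mem_range, not_lt] at hn
  rw [Polynomial.coeff_coe, g.coeff_eq_zero_of_natDegree_lt (by omega), zero_mul, norm_zero]

lemma ev_poly (g : Polynomial ℂ) : ev z (g : PowerSeries ℂ) = g.eval z := by
  unfold ev
  rw [tsum_eq_sum (s := Finset.range (g.natDegree + 1)) (fun n hn => by
    rw [Finset.mem_range, not_lt] at hn
    rw [Polynomial.coeff_coe, g.coeff_eq_zero_of_natDegree_lt (by omega), zero_mul]),
    Polynomial.eval_eq_sum_range]
  exact Finset.sum_congr rfl fun n _ => by rw [Polynomial.coeff_coe]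

lemma ev_sum {ι : Type*} (s : Finset ι) (F : ι → PowerSeries ℂ) (h : ∀ i ∈ s, Gd z (F i)) :
    ev z (∑ i ∈ s, F i) = ∑ i ∈ s, ev z (F i) := by
  unfold ev
  have : (fun n => PowerSeries.coeff n (∑ i ∈ s, F i) * z ^ n)
      = fun n => ∑ i ∈ s, PowerSeries.coeff n (F i) * z ^ n := by
    funext n; rw [map_sum, Finset.sum_mul]
  rw [this]
  exact Summable.tsum_finsetSum fun i hi => (h i hi).of_norm

end Eval

/-- the fiber of the exponent map over `n` is equivalent to `Fin (ν_q n)`. -/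
def vqFiberEquiv' {q : ℕ} (hq2 : 2 ≤ q) (n : ℕ) (hn : n ≠ 0) :
    ((fun p : ℕ × ℕ => q ^ (p.1 + 1) * (p.2 + 1)) ⁻¹' {n}) ≃ Fin (padicValNat q n) where
  toFun p := ⟨p.1.1, by
    have hp : q ^ (p.1.1 + 1) * (p.1.2 + 1) = n := p.2
    have : q ^ (p.1.1 + 1) ∣ n := ⟨p.1.2 + 1, hp.symm⟩
    have := (vq_pow_dvd_iff hq2 hn).1 this
    omega⟩
  invFun j := ⟨(j.1, n / q ^ (j.1 + 1) - 1), by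
    have hd : q ^ (j.1 + 1) ∣ n := (vq_pow_dvd_iff hq2 hn).2 (by omega)
    have hqp : 0 < q ^ (j.1 + 1) := Nat.pow_pos (by omega)
    have h1 : 1 ≤ n / q ^ (j.1 + 1) := by
      rw [Nat.le_div_iff_mul_le hqp, one_mul]
      exact Nat.le_of_dvd (Nat.pos_of_ne_zero hn) hd
    show q ^ (j.1 + 1) * (n / q ^ (j.1 + 1) - 1 + 1) = n
    rw [Nat.sub_add_cancel h1, Nat.mul_div_cancel' hd]⟩
  left_inv p := by
    rcases p with ⟨⟨j, k⟩, hp⟩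
    have hp' : q ^ (j + 1) * (k + 1) = n := hp
    have hqp : 0 < q ^ (j + 1) := Nat.pow_pos (by omega)
    ext
    · rfl
    · show n / q ^ (j + 1) - 1 = k
      rw [← hp', Nat.mul_div_cancel_left _ hqp]
      omega
  right_inv j := by ext; rfl


section Lambert

variable {q : ℕ} (hq : 2 ≤ q) {z : ℂ} (hz : ‖z‖ < 1)

lemma vq_exp_ge (j k : ℕ) (hq : 2 ≤ q) : (j + 1) + (k + 1) ≤ q ^ (j + 1) * (k + 1) := by
  have h1 : j + 1 < q ^ (j + 1) := Nat.lt_pow_self (by omega)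
  nlinarith

include hq hz in
lemma vq_summable_u : Summable fun p : ℕ × ℕ => z ^ (q ^ (p.1 + 1) * (p.2 + 1)) := by
  have h0 : 0 ≤ ‖z‖ := norm_nonneg z
  have g : Summable fun n : ℕ => ‖z‖ ^ (n + 1) :=
    (summable_nat_add_iff 1).mpr (summable_geometric_of_lt_one h0 hz)
  have g' : Summable fun n : ℕ => ‖(‖z‖ ^ (n + 1))‖ := by
    simpa only [norm_pow, norm_norm] using g
  have hs : Summable fun p : ℕ × ℕ => ‖z‖ ^ (p.1 + 1) * ‖z‖ ^ (p.2 + 1) :=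
    summable_mul_of_summable_norm (f := fun n : ℕ => ‖z‖ ^ (n+1)) (g := fun n : ℕ => ‖z‖ ^ (n+1)) g' g'
  apply Summable.of_norm
  refine Summable.of_nonneg_of_le (fun p => norm_nonneg _) (fun p => ?_) hs
  rw [norm_pow, ← pow_add]
  exact pow_le_pow_of_le_one h0 hz.le (vq_exp_ge p.1 p.2 hq)

/-- the evaluated series -/
def Fq (q : ℕ) (z : ℂ) : ℂ := ∑' n, (padicValNat q n : ℂ) * z ^ n

include hq hz in
lemma vq_summable_L : Summable fun j : ℕ => z ^ q ^ (j + 1) / (1 - z ^ q ^ (j + 1)) := by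
  have h0 : 0 ≤ ‖z‖ := norm_nonneg z
  apply Summable.of_norm
  have hs : Summable fun j : ℕ => ‖z‖ ^ (j + 1) / (1 - ‖z‖) := by
    apply Summable.div_const
    exact ((summable_geometric_of_lt_one h0 hz).mul_left ‖z‖).congr
      (fun n => by rw [pow_succ, mul_comm])
  apply hs.of_nonneg_of_le (fun j => norm_nonneg _)
  intro j
  have he : j + 1 ≤ q ^ (j + 1) := (Nat.lt_pow_self (by omega)).le
  have h1 : ‖z ^ q ^ (j + 1)‖ ≤ ‖z‖ ^ (j + 1) := by
    rw [norm_pow]; exact pow_le_pow_of_le_one h0 hz.le he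
  have h2 : 1 - ‖z‖ ≤ ‖1 - z ^ q ^ (j + 1)‖ := by
    have := norm_sub_norm_le (1 : ℂ) (z ^ q ^ (j + 1))
    have h3 : ‖z ^ q ^ (j + 1)‖ ≤ ‖z‖ := by
      calc ‖z ^ q ^ (j + 1)‖ ≤ ‖z‖ ^ (j + 1) := h1
      _ ≤ ‖z‖ ^ 1 := pow_le_pow_of_le_one h0 hz.le (by omega)
      _ = ‖z‖ := pow_one _
    simp only [norm_one] at this
    linarith
  rw [norm_div]
  exact div_le_div₀ (by positivity) h1 (by linarith) h2

include hq hz in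
lemma vq_Fq_eq : Fq q z = ∑' j : ℕ, z ^ q ^ (j + 1) / (1 - z ^ q ^ (j + 1)) := by
  have hu := vq_summable_u hq hz
  have h1 : (∑' p : ℕ × ℕ, z ^ (q ^ (p.1 + 1) * (p.2 + 1))) = Fq q z := by
    rw [← (hu.hasSum.tsum_fiberwise (fun p => q ^ (p.1 + 1) * (p.2 + 1))).tsum_eq]
    unfold Fq
    apply tsum_congr
    intro n
    rcases eq_or_ne n 0 with rfl | hn
    · have he : IsEmpty (((fun p : ℕ × ℕ => q ^ (p.1 + 1) * (p.2 + 1)) ⁻¹' {0} : Set (ℕ × ℕ))) := by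
        constructor
        rintro ⟨⟨j, k⟩, hp⟩
        have : q ^ (j + 1) * (k + 1) = 0 := hp
        have : 0 < q ^ (j + 1) * (k + 1) := by positivity
        omega
      rw [tsum_empty]
      simp
    · have hc : ∀ p : ((fun p : ℕ × ℕ => q ^ (p.1 + 1) * (p.2 + 1)) ⁻¹' {n} : Set (ℕ × ℕ)),
          z ^ (q ^ (p.1.1 + 1) * (p.1.2 + 1)) = z ^ n := by
        intro p
        have h := p.2
        simp only [Set.mem_preimage, Set.mem_singleton_iff] at h
        rw [h]
      calc (∑' p : ((fun p : ℕ × ℕ => q ^ (p.1 + 1) * (p.2 + 1)) ⁻¹' {n} : Set (ℕ × ℕ)),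
              z ^ (q ^ (p.1.1 + 1) * (p.1.2 + 1)))
          = ∑' _ : ((fun p : ℕ × ℕ => q ^ (p.1 + 1) * (p.2 + 1)) ⁻¹' {n} : Set (ℕ × ℕ)), z ^ n :=
            tsum_congr hc
        _ = ∑' _ : Fin (padicValNat q n), z ^ n :=
            (vqFiberEquiv' hq n hn).tsum_eq (fun _ => z ^ n)
        _ = (padicValNat q n : ℂ) * z ^ n := by
            rw [tsum_fintype]
            simp [Finset.sum_const, nsmul_eq_mul]
  rw [← h1, Summable.tsum_prod' hu (fun b => hu.prod_factor b)]
  apply tsum_congr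
  intro j
  have hw : ‖z ^ q ^ (j + 1)‖ < 1 := by
    rw [norm_pow]
    exact pow_lt_one₀ (norm_nonneg z) hz (by positivity)
  calc (∑' k : ℕ, z ^ (q ^ (j + 1) * (k + 1)))
      = ∑' k : ℕ, z ^ q ^ (j + 1) * (z ^ q ^ (j + 1)) ^ k := by
        apply tsum_congr; intro k
        rw [pow_mul, pow_succ, mul_comm]
    _ = z ^ q ^ (j + 1) * (1 - z ^ q ^ (j + 1))⁻¹ := by
        rw [tsum_mul_left, tsum_geometric_of_norm_lt_one hw]
    _ = z ^ q ^ (j + 1) / (1 - z ^ q ^ (j + 1)) := (div_eq_mul_inv _ _).symm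

end Lambert

/-- the root of unity `exp(2πi/q^(m+1))`. -/
def vqZeta (q m : ℕ) : ℂ := Complex.exp ((2 * Real.pi / (q : ℝ) ^ (m + 1) : ℝ) * Complex.I)

lemma vqZeta_norm (q m : ℕ) : ‖vqZeta q m‖ = 1 := by
  rw [vqZeta, Complex.norm_exp_ofReal_mul_I]

lemma vq_two_le_pow {q : ℕ} (hq : 2 ≤ q) (m : ℕ) : (2:ℝ) ≤ (q:ℝ) ^ (m + 1) := by
  have h : (2:ℕ) ≤ q ^ (m+1) := le_trans hq (Nat.le_self_pow (by omega) q)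
  calc (2:ℝ) = ((2:ℕ):ℝ) := by norm_num
  _ ≤ ((q ^ (m+1) : ℕ) : ℝ) := by exact_mod_cast h
  _ = (q:ℝ) ^ (m+1) := by push_cast; ring

lemma vqZeta_injective {q : ℕ} (hq : 2 ≤ q) : Function.Injective (vqZeta q) := by
  intro m m' h
  rw [vqZeta, vqZeta, Complex.exp_eq_exp_iff_exists_int] at h
  obtain ⟨k, hk⟩ := h
  have hπ := Real.pi_pos
  have hqm : (2:ℝ) ≤ (q:ℝ) ^ (m + 1) := vq_two_le_pow hq m
  have hqm' : (2:ℝ) ≤ (q:ℝ) ^ (m' + 1) := vq_two_le_pow hq m'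
  set a := (2 * Real.pi / (q : ℝ) ^ (m + 1) : ℝ) with ha
  set b := (2 * Real.pi / (q : ℝ) ^ (m' + 1) : ℝ) with hb
  have hk' : ((a : ℂ)) * Complex.I = ((b + (k:ℝ) * (2*Real.pi) : ℝ) : ℂ) * Complex.I := by
    rw [hk]; push_cast; ring
  have hre : a = b + (k:ℝ) * (2*Real.pi) := by
    have := mul_right_cancel₀ Complex.I_ne_zero hk'
    exact_mod_cast this
  have hab : 0 < a ∧ a ≤ Real.pi := by
    constructor
    · apply div_pos (by linarith) (by linarith)
    · rw [ha, div_le_iff₀ (by linarith)]; nlinarith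
  have hab' : 0 < b ∧ b ≤ Real.pi := by
    constructor
    · apply div_pos (by linarith) (by linarith)
    · rw [hb, div_le_iff₀ (by linarith)]; nlinarith
  have hk0 : k = 0 := by
    rcases lt_trichotomy k 0 with hc | hc | hc
    · have h1 : k ≤ -1 := by omega
      have h2 : (k:ℝ) ≤ -1 := by exact_mod_cast h1
      nlinarith
    · exact hc
    · have h1 : (1:ℤ) ≤ k := hc
      have h2 : (1:ℝ) ≤ (k:ℝ) := by exact_mod_cast h1
      nlinarith
  rw [hk0] at hre
  simp only [Int.cast_zero, zero_mul, add_zero] at hre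
  have hA : (q:ℝ)^(m+1) = 2*Real.pi/a := by rw [ha]; field_simp
  have hB : (q:ℝ)^(m'+1) = 2*Real.pi/b := by rw [hb]; field_simp
  have hAB : (q:ℝ)^(m+1) = (q:ℝ)^(m'+1) := by rw [hA, hB, hre]
  have hnat : q ^ (m+1) = q ^ (m'+1) := by
    have : ((q ^ (m+1) : ℕ) : ℝ) = ((q ^ (m'+1) : ℕ) : ℝ) := by push_cast; exact_mod_cast hAB
    exact_mod_cast this
  have := Nat.pow_right_injective hq hnat
  omega

/-- `ζ^E = 1` when `q^(m+1) ∣ E`. -/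
lemma vqZeta_pow_eq_one {q m E : ℕ} (hq : 2 ≤ q) (hE : q ^ (m+1) ∣ E) :
    vqZeta q m ^ E = 1 := by
  obtain ⟨c, rfl⟩ := hE
  rw [vqZeta, ← Complex.exp_nat_mul]
  have hq0 : ((q:ℝ) ^ (m+1)) ≠ 0 := by
    have := vq_two_le_pow hq m; linarith
  have hqmc : ((q:ℂ) ^ (m+1)) ≠ 0 := by
    have : (q:ℂ) ≠ 0 := by exact_mod_cast (by omega : q ≠ 0)
    exact pow_ne_zero _ this
  have key : ((q ^ (m+1) * c : ℕ) : ℂ) * ((2 * Real.pi / (q : ℝ) ^ (m + 1) : ℝ) * Complex.I)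
      = (c : ℤ) * (2 * (Real.pi : ℂ) * Complex.I) := by
    calc ((q ^ (m+1) * c : ℕ) : ℂ) * ((2 * Real.pi / (q : ℝ) ^ (m + 1) : ℝ) * Complex.I)
        = (c:ℂ) * (2 * (Real.pi:ℂ) * Complex.I) * ((q:ℂ)^(m+1) * ((q:ℂ)^(m+1))⁻¹) := by
          push_cast; ring
      _ = (c : ℤ) * (2 * (Real.pi : ℂ) * Complex.I) := by
          rw [mul_inv_cancel₀ hqmc]; push_cast; ring
  rw [key, Complex.exp_int_mul_two_pi_mul_I]

/-- `ζ^(q^(j+1)) ≠ 1` for `j < m`. -/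
lemma vqZeta_pow_ne_one {q m j : ℕ} (hq : 2 ≤ q) (hj : j < m) :
    vqZeta q m ^ (q ^ (j+1)) ≠ 1 := by
  rw [vqZeta, ← Complex.exp_nat_mul]
  intro hcon
  rw [Complex.exp_eq_one_iff] at hcon
  obtain ⟨k, hk⟩ := hcon
  have hπ := Real.pi_pos
  -- the exponent is 2π q^(j+1)/q^(m+1) = 2π / q^(m-j)
  have hq0 : (0:ℝ) < (q:ℝ) := by exact_mod_cast (by omega : 0 < q)
  have hqm : (2:ℝ) ≤ (q:ℝ) ^ (m - j) := by
    have := vq_two_le_pow hq (m - j - 1)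
    have hmj : m - j - 1 + 1 = m - j := by omega
    rwa [hmj] at this
  have hsplit : (q:ℝ) ^ (m+1) = (q:ℝ) ^ (j+1) * (q:ℝ) ^ (m - j) := by
    rw [← pow_add]
    congr 1
    omega
  have hqc : (q:ℂ) ≠ 0 := by exact_mod_cast (by omega : q ≠ 0)
  have h1 : ((q:ℂ) ^ (j+1)) ≠ 0 := pow_ne_zero _ hqc
  have h2 : ((q:ℂ) ^ (m - j)) ≠ 0 := pow_ne_zero _ hqc
  have hsplitC : (q:ℂ) ^ (m+1) = (q:ℂ) ^ (j+1) * (q:ℂ) ^ (m - j) := by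
    rw [← pow_add]
    congr 1
    omega
  have hx : ((q ^ (j+1) : ℕ) : ℂ) * ((2 * Real.pi / (q : ℝ) ^ (m + 1) : ℝ) * Complex.I)
      = ((2 * Real.pi / (q:ℝ) ^ (m - j) : ℝ) : ℂ) * Complex.I := by
    push_cast
    rw [hsplitC]
    field_simp
  rw [hx] at hk
  have hk' : ((2 * Real.pi / (q:ℝ) ^ (m - j) : ℝ) : ℂ) * Complex.I
      = (((k:ℝ) * (2 * Real.pi) : ℝ) : ℂ) * Complex.I := by
    rw [hk]; push_cast; ring
  have hre : (2 * Real.pi / (q:ℝ) ^ (m - j) : ℝ) = (k:ℝ) * (2 * Real.pi) := by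
    have := mul_right_cancel₀ Complex.I_ne_zero hk'
    exact_mod_cast this
  have h1 : 0 < 2 * Real.pi / (q:ℝ) ^ (m - j) := by positivity
  have h2 : 2 * Real.pi / (q:ℝ) ^ (m - j) < 2 * Real.pi := by
    rw [div_lt_iff₀ (by linarith)]
    nlinarith
  rcases lt_trichotomy k 0 with hc | hc | hc
  · have : (k:ℝ) ≤ -1 := by exact_mod_cast (by omega : k ≤ -1)
    nlinarith
  · rw [hc] at hre; push_cast at hre; linarith
  · have : (1:ℝ) ≤ (k:ℝ) := by exact_mod_cast hc
    nlinarith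

section Part4

variable {q : ℕ}

/-- the approach sequence -/
def vqT (s : ℕ) : ℝ := 1 - 1 / (s + 2)

lemma vqT_mem (s : ℕ) : 0 ≤ vqT s ∧ vqT s < 1 := by
  unfold vqT
  have h2 : (0:ℝ) < (s:ℝ) + 2 := by positivity
  constructor
  · have : 1 / ((s:ℝ) + 2) ≤ 1 / 2 := by
      apply div_le_div_of_nonneg_left (by norm_num) (by norm_num) (by linarith)
    linarith
  · have : 0 < 1 / ((s:ℝ) + 2) := by positivity
    linarith

lemma vqT_tendsto : Tendsto vqT atTop (𝓝 1) := by
  have hb : Tendsto (fun s : ℕ => ((s:ℝ) + 2)) atTop atTop :=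
    tendsto_natCast_atTop_atTop.atTop_add tendsto_const_nhds
  have h : Tendsto (fun s : ℕ => ((s:ℝ) + 2)⁻¹) atTop (𝓝 0) := hb.inv_tendsto_atTop
  have h2 : Tendsto (fun s : ℕ => 1 - ((s:ℝ) + 2)⁻¹) atTop (𝓝 (1 - 0)) :=
    tendsto_const_nhds.sub h
  show Tendsto (fun s : ℕ => 1 - 1 / ((s:ℝ) + 2)) atTop (𝓝 1)
  simpa [one_div] using h2

/-- The key blow-up: along `t_s ζ_m`, the modulus of `Fq` tends to infinity. -/
lemma vq_blowup (hq : 2 ≤ q) (m : ℕ) :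
    Tendsto (fun s : ℕ => ‖Fq q ((vqT s : ℂ) * vqZeta q m)‖) atTop atTop := by
  set ζ := vqZeta q m with hζ
  set z : ℕ → ℂ := fun s => (vqT s : ℂ) * ζ with hzdef
  have hznorm : ∀ s, ‖z s‖ = vqT s := by
    intro s
    rw [hzdef]
    simp only [norm_mul, Complex.norm_real, hζ, vqZeta_norm q m, mul_one, Real.norm_eq_abs]
    exact abs_of_nonneg (vqT_mem s).1
  have hz1 : ∀ s, ‖z s‖ < 1 := fun s => (hznorm s).trans_lt (vqT_mem s).2
  -- z s → ζ
  have hztend : Tendsto z atTop (𝓝 ζ) := by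
    have h1 : Tendsto (fun s => ((vqT s : ℝ) : ℂ)) atTop (𝓝 (1:ℂ)) := by
      have := (Complex.continuous_ofReal.tendsto 1).comp vqT_tendsto
      simpa [Function.comp_def] using this
    have := h1.mul (tendsto_const_nhds (x := ζ))
    simpa using this
  -- split the Lambert series
  have hsplit : ∀ s, Fq q (z s)
      = (∑ j ∈ Finset.range m, (z s) ^ q ^ (j+1) / (1 - (z s) ^ q ^ (j+1)))
        + ∑' j : ℕ, (z s) ^ q ^ (j+m+1) / (1 - (z s) ^ q ^ (j+m+1)) := by
    intro s
    rw [vq_Fq_eq hq (hz1 s), ← Summable.sum_add_tsum_nat_add m (vq_summable_L hq (hz1 s))]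
  -- tail is real
  have htail : ∀ s, (∑' j : ℕ, (z s) ^ q ^ (j+m+1) / (1 - (z s) ^ q ^ (j+m+1)))
      = ((∑' j : ℕ, (vqT s) ^ q ^ (j+m+1) / (1 - (vqT s) ^ q ^ (j+m+1)) : ℝ) : ℂ) := by
    intro s
    rw [Complex.ofReal_tsum]
    apply tsum_congr
    intro j
    have hdvd : q ^ (m+1) ∣ q ^ (j+m+1) := pow_dvd_pow q (by omega)
    have hzE : (z s) ^ q ^ (j+m+1) = (((vqT s) ^ q ^ (j+m+1) : ℝ) : ℂ) := by
      rw [hzdef]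
      simp only [mul_pow]
      rw [vqZeta_pow_eq_one hq hdvd, mul_one]
      push_cast
      ring
    rw [hzE]
    push_cast
    ring
  -- the real tail dominates its first term, which blows up
  set b : ℕ → ℝ := fun s => (vqT s) ^ q ^ (m+1) / (1 - (vqT s) ^ q ^ (m+1)) with hbdef
  have htail_ge : ∀ s, b s ≤ ∑' j : ℕ, (vqT s) ^ q ^ (j+m+1) / (1 - (vqT s) ^ q ^ (j+m+1)) := by
    intro s
    have h0 := (vqT_mem s).1
    have h1 := (vqT_mem s).2
    have hsummC : Summable (fun j : ℕ => (z s) ^ q ^ (j+m+1) / (1 - (z s) ^ q ^ (j+m+1))) := by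
      exact (summable_nat_add_iff m).mpr (vq_summable_L hq (hz1 s))
    have hsumm : Summable (fun j : ℕ => (vqT s) ^ q ^ (j+m+1) / (1 - (vqT s) ^ q ^ (j+m+1))) := by
      rw [← Complex.summable_ofReal]
      apply hsummC.congr
      intro j
      have hdvd : q ^ (m+1) ∣ q ^ (j+m+1) := pow_dvd_pow q (by omega)
      have hzE : (z s) ^ q ^ (j+m+1) = (((vqT s) ^ q ^ (j+m+1) : ℝ) : ℂ) := by
        rw [hzdef]; simp only [mul_pow]; rw [vqZeta_pow_eq_one hq hdvd, mul_one]; push_cast; ring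
      rw [hzE]; push_cast; ring
    have key := Summable.le_tsum hsumm 0 (fun j _ => by
      have hE : (1:ℕ) ≤ q ^ (j+m+1) := Nat.one_le_pow _ _ (by omega)
      have hlt : (vqT s) ^ q ^ (j+m+1) < 1 := pow_lt_one₀ h0 h1 (by positivity)
      have hd : (0:ℝ) < 1 - (vqT s) ^ q ^ (j+m+1) := by linarith
      positivity)
    simpa using key
  have hbtend : Tendsto b atTop atTop := by
    have hpow : Tendsto (fun s => (vqT s) ^ q ^ (m+1)) atTop (𝓝 1) := by
      have := vqT_tendsto.pow (q ^ (m+1))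
      simpa using this
    have hden : Tendsto (fun s => 1 - (vqT s) ^ q ^ (m+1)) atTop (𝓝[>] 0) := by
      apply tendsto_nhdsWithin_of_tendsto_nhds_of_eventually_within
      · have := tendsto_const_nhds (x := (1:ℝ)) (f := atTop (α := ℕ)) |>.sub hpow
        simpa using this
      · filter_upwards with s
        have h0 := (vqT_mem s).1
        have h1 := (vqT_mem s).2
        have hlt : (vqT s) ^ q ^ (m+1) < 1 := pow_lt_one₀ h0 h1 (by positivity)
        simpa using hlt
    have hinv : Tendsto (fun s => (1 - (vqT s) ^ q ^ (m+1))⁻¹) atTop atTop :=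
      tendsto_inv_nhdsGT_zero.comp hden
    have := Filter.Tendsto.pos_mul_atTop one_pos hpow hinv
    apply this.congr
    intro s
    simp only [hbdef, div_eq_mul_inv]
  -- head converges
  have hne : ∀ j < m, (1 : ℂ) - ζ ^ q ^ (j+1) ≠ 0 := by
    intro j hj
    have := vqZeta_pow_ne_one hq hj
    rw [hζ]
    intro hcon
    apply this
    have : (ζ : ℂ) ^ q ^ (j+1) = 1 := by
      have := sub_eq_zero.mp hcon
      exact this.symm
    exact this
  have hhead : Tendsto (fun s => ∑ j ∈ Finset.range m, (z s) ^ q ^ (j+1) / (1 - (z s) ^ q ^ (j+1)))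
      atTop (𝓝 (∑ j ∈ Finset.range m, ζ ^ q ^ (j+1) / (1 - ζ ^ q ^ (j+1)))) := by
    apply tendsto_finset_sum
    intro j hj
    rw [Finset.mem_range] at hj
    apply Filter.Tendsto.div (hztend.pow _)
    · exact (tendsto_const_nhds.sub (hztend.pow _))
    · exact hne j hj
  have hheadnorm : Tendsto
      (fun s => ‖∑ j ∈ Finset.range m, (z s) ^ q ^ (j+1) / (1 - (z s) ^ q ^ (j+1))‖)
      atTop (𝓝 ‖∑ j ∈ Finset.range m, ζ ^ q ^ (j+1) / (1 - ζ ^ q ^ (j+1))‖) :=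
    hhead.norm
  -- combine
  have hlower : ∀ s, b s - ‖∑ j ∈ Finset.range m, (z s) ^ q ^ (j+1) / (1 - (z s) ^ q ^ (j+1))‖
      ≤ ‖Fq q (z s)‖ := by
    intro s
    have h2 : b s ≤ ‖(∑' j : ℕ, (z s) ^ q ^ (j+m+1) / (1 - (z s) ^ q ^ (j+m+1)))‖ := by
      rw [htail s, Complex.norm_real, Real.norm_eq_abs]
      exact (htail_ge s).trans (le_abs_self _)
    rw [hsplit s]
    set H := ∑ j ∈ Finset.range m, (z s) ^ q ^ (j+1) / (1 - (z s) ^ q ^ (j+1))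
    set T := ∑' j : ℕ, (z s) ^ q ^ (j+m+1) / (1 - (z s) ^ q ^ (j+m+1))
    have h1 : ‖T‖ - ‖H‖ ≤ ‖H + T‖ := by
      have h0 : H + T - H = T := by ring
      have := norm_sub_le (H + T) H
      rw [h0] at this
      linarith
    linarith
  apply tendsto_atTop_mono hlower
  have := hbtend.atTop_add (hheadnorm.neg)
  apply this.congr
  intro s
  ring

end Part4

section Part5

lemma ev_zero {z : ℂ} : ev z (0 : PowerSeries ℂ) = 0 := by
  unfold ev; simp

lemma vq_z_norm_lt (q m s : ℕ) : ‖(vqT s : ℂ) * vqZeta q m‖ < 1 := by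
  rw [norm_mul, Complex.norm_real, vqZeta_norm q m, mul_one, Real.norm_eq_abs,
    abs_of_nonneg (vqT_mem s).1]
  exact (vqT_mem s).2

lemma vq_z_tendsto (q m : ℕ) :
    Tendsto (fun s => (vqT s : ℂ) * vqZeta q m) atTop (𝓝 (vqZeta q m)) := by
  have h1 : Tendsto (fun s => ((vqT s : ℝ) : ℂ)) atTop (𝓝 (1:ℂ)) := by
    have := (Complex.continuous_ofReal.tendsto 1).comp vqT_tendsto
    simpa [Function.comp_def] using this
  have := h1.mul (tendsto_const_nhds (x := vqZeta q m))
  simpa using this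

lemma vq_root {q : ℕ} (hq : 2 ≤ q) {r : ℕ} (hr : 1 ≤ r) (G : ℕ → Polynomial ℂ)
    (H : ∀ z : ℂ, ‖z‖ < 1 → ∑ i ∈ Finset.range (r+1), (G i).eval z * Fq q z ^ i = 0)
    (m : ℕ) : (G r).eval (vqZeta q m) = 0 := by
  set ζ := vqZeta q m with hζ
  set z : ℕ → ℂ := fun s => (vqT s : ℂ) * ζ with hzdef
  have hΦ : Tendsto (fun s => ‖Fq q (z s)‖) atTop atTop := vq_blowup hq m
  have hev : ∀ᶠ s in atTop, 1 ≤ ‖Fq q (z s)‖ := hΦ.eventually_ge_atTop 1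
  have hineq : ∀ᶠ s in atTop, ‖(G r).eval (z s)‖
      ≤ (∑ i ∈ Finset.range r, ‖(G i).eval (z s)‖) * ‖Fq q (z s)‖⁻¹ := by
    filter_upwards [hev] with s hs
    have hΦpos : (0:ℝ) < ‖Fq q (z s)‖ := lt_of_lt_of_le one_pos hs
    have heq := H (z s) (vq_z_norm_lt q m s)
    rw [Finset.sum_range_succ] at heq
    have heq2 : (G r).eval (z s) * Fq q (z s) ^ r
        = -∑ i ∈ Finset.range r, (G i).eval (z s) * Fq q (z s) ^ i :=
      eq_neg_of_add_eq_zero_right heq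
    set A := ‖(G r).eval (z s)‖ with hA
    set Φ := ‖Fq q (z s)‖ with hΦdef
    set S := ∑ i ∈ Finset.range r, ‖(G i).eval (z s)‖ with hS
    have hnorm : A * Φ ^ r ≤ S * Φ ^ (r-1) := by
      rw [hA, hΦdef, ← norm_pow, ← norm_mul, heq2, norm_neg]
      calc ‖∑ i ∈ Finset.range r, (G i).eval (z s) * Fq q (z s) ^ i‖
          ≤ ∑ i ∈ Finset.range r, ‖(G i).eval (z s) * Fq q (z s) ^ i‖ := norm_sum_le _ _
        _ ≤ ∑ i ∈ Finset.range r, ‖(G i).eval (z s)‖ * ‖Fq q (z s)‖ ^ (r-1) := by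
            apply Finset.sum_le_sum
            intro i hi
            rw [Finset.mem_range] at hi
            rw [norm_mul, norm_pow]
            apply mul_le_mul_of_nonneg_left _ (norm_nonneg _)
            exact pow_le_pow_right₀ hs (by omega)
        _ = S * Φ ^ (r-1) := by rw [hS, hΦdef, Finset.sum_mul]
    have hpow : Φ ^ r = Φ ^ (r-1) * Φ := by
      rw [← pow_succ]; congr 1; omega
    have hP : (0:ℝ) < Φ ^ (r-1) := pow_pos hΦpos _
    have h1 : A * Φ ≤ S := by
      have h'' : (A * Φ) * Φ ^ (r-1) ≤ S * Φ ^ (r-1) := by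
        calc (A * Φ) * Φ ^ (r-1) = A * Φ ^ r := by rw [hpow]; ring
          _ ≤ S * Φ ^ (r-1) := hnorm
      exact le_of_mul_le_mul_right h'' hP
    rw [← div_eq_mul_inv, le_div_iff₀ hΦpos]
    exact h1
  have hztend : Tendsto z atTop (𝓝 ζ) := vq_z_tendsto q m
  have hGr : Tendsto (fun s => ‖(G r).eval (z s)‖) atTop (𝓝 ‖(G r).eval ζ‖) :=
    (((G r).continuous.tendsto ζ).comp hztend).norm
  have hS : Tendsto (fun s => ∑ i ∈ Finset.range r, ‖(G i).eval (z s)‖) atTop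
      (𝓝 (∑ i ∈ Finset.range r, ‖(G i).eval ζ‖)) :=
    tendsto_finset_sum _ fun i _ => (((G i).continuous.tendsto ζ).comp hztend).norm
  have hinv : Tendsto (fun s => ‖Fq q (z s)‖⁻¹) atTop (𝓝 0) :=
    tendsto_inv_atTop_zero.comp hΦ
  have hRHS : Tendsto (fun s => (∑ i ∈ Finset.range r, ‖(G i).eval (z s)‖) * ‖Fq q (z s)‖⁻¹)
      atTop (𝓝 ((∑ i ∈ Finset.range r, ‖(G i).eval ζ‖) * 0)) := hS.mul hinv
  have hle : ‖(G r).eval ζ‖ ≤ (∑ i ∈ Finset.range r, ‖(G i).eval ζ‖) * 0 :=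
    le_of_tendsto_of_tendsto hGr hRHS hineq
  rw [mul_zero] at hle
  exact norm_le_zero_iff.mp hle

lemma vq_Gd_V {q : ℕ} (hq : 2 ≤ q) {z : ℂ} (hz : ‖z‖ < 1) :
    Gd z (PowerSeries.mk fun n => (padicValNat q n : ℂ)) := by
  have hs : Summable fun n : ℕ => (n:ℝ) ^ 1 * ‖z‖ ^ n :=
    summable_pow_mul_geometric_of_norm_lt_one 1 (by rwa [Real.norm_eq_abs, abs_of_nonneg (norm_nonneg z)])
  refine Summable.of_nonneg_of_le (fun n => norm_nonneg _) (fun n => ?_) hs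
  rw [PowerSeries.coeff_mk, norm_mul, norm_pow, Complex.norm_natCast]
  rw [pow_one]
  apply mul_le_mul_of_nonneg_right _ (pow_nonneg (norm_nonneg z) n)
  exact_mod_cast vq_le_self (n := n) hq

lemma vq_ev_V {q : ℕ} {z : ℂ} :
    ev z (PowerSeries.mk fun n => (padicValNat q n : ℂ)) = Fq q z :=
  tsum_congr fun n => by rw [PowerSeries.coeff_mk]

end Part5

end VqAux

/-- Let `q ≥ 2` and let `A` be a subfield of `ℂ` all of whose elements are
algebraic over `ℚ`. Then the formal power series `V_q(X) = ∑_{n ≥ 1} ν_q(n) Xⁿ ∈ A[[X]]` is not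
algebraic over `A(X)`: there are no `r ≥ 1` and polynomials `g_0, …, g_r ∈ A[X]` with `g_r ≠ 0`
such that `∑_{i=0}^{r} g_i(X) · V_q(X)^i = 0` in `A[[X]]`. -/
theorem Vq_not_algebraic (q : ℕ) (hq : 2 ≤ q) (A : Subfield ℂ)
    (hA : ∀ x : A, IsAlgebraic ℚ (x : ℂ)) :
    ¬ ∃ (r : ℕ) (g : ℕ → Polynomial A), 1 ≤ r ∧ g r ≠ 0 ∧
      ∑ i ∈ Finset.range (r + 1),
        (g i : PowerSeries A) *
          (PowerSeries.mk fun n => (padicValNat q n : A)) ^ i = 0 := by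
  rintro ⟨r, g, hr, hgr, hsum⟩
  set φ : A →+* ℂ := A.subtype with hφ
  set G : ℕ → Polynomial ℂ := fun i => (g i).map φ with hGdef
  have hmap : ∑ i ∈ Finset.range (r+1),
      ((G i : Polynomial ℂ) : PowerSeries ℂ)
        * (PowerSeries.mk fun n => (padicValNat q n : ℂ)) ^ i = 0 := by
    have hpoly : ∀ i, PowerSeries.map φ ((g i : PowerSeries A))
        = ((G i : Polynomial ℂ) : PowerSeries ℂ) := by
      intro i
      ext n
      simp [PowerSeries.coeff_map, Polynomial.coeff_coe, Polynomial.coeff_map, hGdef]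
    have hV : PowerSeries.map φ (PowerSeries.mk fun n => (padicValNat q n : A))
        = PowerSeries.mk fun n => (padicValNat q n : ℂ) := by
      ext n
      simp [PowerSeries.coeff_map, PowerSeries.coeff_mk]
    have h0 := congrArg (PowerSeries.map φ) hsum
    rw [map_zero, map_sum] at h0
    rw [← h0]
    apply Finset.sum_congr rfl
    intro i _
    rw [map_mul, map_pow, hpoly i, hV]
  have H : ∀ z : ℂ, ‖z‖ < 1 →
      ∑ i ∈ Finset.range (r+1), (G i).eval z * Fq q z ^ i = 0 := by
    intro z hz
    have hGdV : Gd z (PowerSeries.mk fun n => (padicValNat q n : ℂ)) := vq_Gd_V hq hz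
    have hterm : ∀ i ∈ Finset.range (r+1),
        Gd z (((G i : Polynomial ℂ) : PowerSeries ℂ)
          * (PowerSeries.mk fun n => (padicValNat q n : ℂ)) ^ i) :=
      fun i _ => (Gd.poly (G i)).mul (hGdV.pow i)
    have h1 := congrArg (ev z) hmap
    rw [ev_zero, ev_sum _ _ hterm] at h1
    rw [← h1]
    apply Finset.sum_congr rfl
    intro i _
    rw [ev_mul (Gd.poly (G i)) (hGdV.pow i), ev_poly, ev_pow hGdV, vq_ev_V]
  have hroot : ∀ m : ℕ, vqZeta q m ∈ {x : ℂ | (G r).IsRoot x} :=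
    fun m => vq_root hq hr G H m
  have hGr0 : G r ≠ 0 := by
    rw [hGdef]
    simp only
    intro hcon
    exact hgr ((Polynomial.map_eq_zero_iff (f := φ) Subtype.val_injective).mp hcon)
  exact hGr0 ((G r).eq_zero_of_infinite_isRoot
    (Set.infinite_of_injective_forall_mem (vqZeta_injective hq) hroot))
end

section
/- Let q ≥ 2 and k ≥ 2 be integers. For every complex number x with |x| < 1, we have V_{q,k}(x) = ∑_{j≥1} a_j · x^{q^j} / (1 − x^{q^j}), where a_j = 1 if k does not divide j and a_j = 1 − k if k divides j, and the series on the right converges absolutely. -/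
private lemma pow_dvd_padic {q m n : ℕ} (hq : 2 ≤ q) :
    q ^ m ∣ (n + 1) ↔ m ≤ padicValNat q (n + 1) := by
  have hfin : FiniteMultiplicity q (n + 1) :=
    Nat.finiteMultiplicity_iff.2 ⟨by omega, Nat.succ_pos n⟩
  rw [padicValNat_def' (by omega : q ≠ 1) (Nat.succ_ne_zero n), pow_dvd_iff_le_emultiplicity,
    hfin.emultiplicity_eq_multiplicity]
  exact_mod_cast Iff.rfl

private lemma sum_a_eq (k : ℕ) (hk : 2 ≤ k) (ν : ℕ) :
    ∑ j ∈ Finset.range ν, (if k ∣ (j + 1) then 1 - (k : ℂ) else 1) = ((ν % k : ℕ) : ℂ) := by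
  induction ν with
  | zero => simp
  | succ ν ih =>
    rw [Finset.sum_range_succ, ih]
    by_cases h : k ∣ (ν + 1)
    · obtain ⟨c, hc⟩ := h
      rcases c with _ | c
      · omega
      rw [Nat.mul_succ] at hc
      set t := k * c with ht
      have h1 : (ν + 1) % k = 0 := by
        have : ν + 1 = k * (c + 1) := by rw [Nat.mul_succ]; omega
        rw [this]; exact Nat.mul_mod_right k (c + 1)
      have h2 : ν % k = k - 1 := by
        have e : ν = k * c + (k - 1) := by omega
        rw [e, Nat.mul_add_mod]
        exact Nat.mod_eq_of_lt (by omega)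
      rw [if_pos ⟨c + 1, by rw [Nat.mul_succ]; omega⟩, h1, h2]
      push_cast [Nat.cast_sub (by omega : 1 ≤ k)]
      ring
    · have hd := Nat.mod_add_div' ν k
      have h2 : (ν + 1) % k = (ν % k + 1) % k := by
        conv_lhs => rw [← hd]
        rw [Nat.add_right_comm, Nat.add_mul_mod_self_right]
      have h3 : ν % k < k := Nat.mod_lt _ (by omega)
      have h1 : (ν + 1) % k = ν % k + 1 := by
        rcases Nat.lt_or_ge (ν % k + 1) k with h4 | h4
        · rw [h2, Nat.mod_eq_of_lt h4]
        · exfalso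
          apply h
          apply Nat.dvd_of_mod_eq_zero
          have h5 : ν % k + 1 = k := by omega
          rw [h2, h5, Nat.mod_self]
      rw [if_neg h, h1]
      push_cast
      ring

private lemma tsum_pow_succ {ξ : ℂ} (h : ‖ξ‖ < 1) :
    ∑' m : ℕ, ξ ^ (m + 1) = ξ / (1 - ξ) := by
  calc ∑' m : ℕ, ξ ^ (m + 1) = ∑' m : ℕ, ξ * ξ ^ m := by
        refine tsum_congr fun m => ?_
        rw [pow_succ, mul_comm]
    _ = ξ * ∑' m : ℕ, ξ ^ m := tsum_mul_left
    _ = ξ * (1 - ξ)⁻¹ := by rw [tsum_geometric_of_norm_lt_one h]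
    _ = ξ / (1 - ξ) := (div_eq_mul_inv _ _).symm

/-- Let `q ≥ 2` and `k ≥ 2`. For every complex `x` with `|x| < 1`,
`V_{q,k}(x) = ∑_{j ≥ 1} a_j · x^{q^j}/(1 − x^{q^j})`, where `a_j = 1` if `k ∤ j` and
`a_j = 1 − k` if `k ∣ j`, the right-hand series converging absolutely. Here
`V_{q,k}(x) = ∑_{n ≥ 1} (ν_q(n) mod k) xⁿ`. -/
theorem Vqk_eq_sum_of_fractions (q k : ℕ) (hq : 2 ≤ q) (hk : 2 ≤ k)
    (x : ℂ) (hx : ‖x‖ < 1) :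
    (Summable fun j : ℕ =>
      ‖(if k ∣ (j + 1) then 1 - (k : ℂ) else 1) * x ^ q ^ (j + 1) / (1 - x ^ q ^ (j + 1))‖) ∧
    ∑' n : ℕ, ((padicValNat q n % k : ℕ) : ℂ) * x ^ n
      = ∑' j : ℕ,
          (if k ∣ (j + 1) then 1 - (k : ℂ) else 1) * x ^ q ^ (j + 1) / (1 - x ^ q ^ (j + 1)) := by
  have hq1 : 1 < q := by omega
  set r := ‖x‖ with hrdef
  have hr0 : 0 ≤ r := norm_nonneg x
  have hr1 : r < 1 := hx
  set a : ℕ → ℂ := fun j => if k ∣ (j + 1) then 1 - (k : ℂ) else 1 with ha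
  have ha_bd : ∀ j, ‖a j‖ ≤ (k : ℝ) + 1 := by
    intro j
    simp only [ha]
    split
    · refine (norm_sub_le _ _).trans ?_
      simp only [norm_one, Complex.norm_natCast]
      linarith
    · simp only [norm_one]
      have : (0 : ℝ) ≤ (k : ℝ) := Nat.cast_nonneg k
      linarith
  have hQj : ∀ j : ℕ, j + 1 ≤ q ^ (j + 1) := fun j => (Nat.lt_pow_self (n := j + 1) hq1).le
  have hQpos : ∀ j : ℕ, 0 < q ^ (j + 1) := fun j => pow_pos (by omega) _
  have hxQ : ∀ j : ℕ, ‖x ^ q ^ (j + 1)‖ < 1 := by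
    intro j
    rw [norm_pow]
    exact pow_lt_one₀ hr0 hr1 (hQpos j).ne'
  have hne : ∀ j : ℕ, (1 : ℂ) - x ^ q ^ (j + 1) ≠ 0 := by
    intro j
    refine sub_ne_zero.mpr fun h => ?_
    have := hxQ j
    rw [← h, norm_one] at this
    exact lt_irrefl 1 this
  -- summability of the RHS series
  have hterm_bd : ∀ j : ℕ, ‖a j * x ^ q ^ (j + 1) / (1 - x ^ q ^ (j + 1))‖
      ≤ ((k : ℝ) + 1) * r ^ (j + 1) / (1 - r) := by
    intro j
    rw [norm_div, norm_mul, norm_pow]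
    have h1 : r ^ (q ^ (j + 1)) ≤ r ^ (j + 1) :=
      pow_le_pow_of_le_one hr0 hr1.le (hQj j)
    have h3 : r ^ (q ^ (j + 1)) ≤ r := by
      calc r ^ (q ^ (j + 1)) ≤ r ^ 1 := pow_le_pow_of_le_one hr0 hr1.le (hQpos j)
        _ = r := pow_one r
    have h2 : 1 - r ≤ ‖1 - x ^ q ^ (j + 1)‖ := by
      have h4 := norm_sub_norm_le (1 : ℂ) (x ^ q ^ (j + 1))
      rw [norm_one, norm_pow] at h4
      linarith
    have h1r : 0 < 1 - r := by linarith
    exact div_le_div₀ (by positivity)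
      (mul_le_mul (ha_bd j) h1 (by positivity) (by positivity)) h1r h2
  have hsum1 : Summable (fun j : ℕ =>
      ‖a j * x ^ q ^ (j + 1) / (1 - x ^ q ^ (j + 1))‖) := by
    refine Summable.of_nonneg_of_le (fun j => norm_nonneg _) hterm_bd ?_
    have hgeo : Summable (fun j : ℕ => r ^ j) := summable_geometric_of_lt_one hr0 hr1
    refine (hgeo.mul_left (((k : ℝ) + 1) * r / (1 - r))).congr fun j => ?_
    rw [pow_succ]
    field_simp
  -- summability of the LHS series
  have hg : Summable (fun n : ℕ => ((padicValNat q n % k : ℕ) : ℂ) * x ^ n) := by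
    apply Summable.of_norm
    refine Summable.of_nonneg_of_le (fun n => norm_nonneg _)
      (f := fun n => (k : ℝ) * r ^ n) (fun n => ?_)
      ((summable_geometric_of_lt_one hr0 hr1).mul_left _)
    rw [norm_mul, norm_pow, Complex.norm_natCast]
    have h5 : padicValNat q n % k < k := Nat.mod_lt _ (by omega)
    have h6 : ((padicValNat q n % k : ℕ) : ℝ) ≤ (k : ℝ) := by exact_mod_cast h5.le
    have h7 : (0 : ℝ) ≤ r ^ n := by positivity
    exact mul_le_mul_of_nonneg_right h6 h7
  -- the double series
  set F : ℕ → ℕ → ℂ :=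
    fun j n => if q ^ (j + 1) ∣ (n + 1) then a j * x ^ (n + 1) else 0 with hF
  set s : ℝ := Real.sqrt r with hs
  have hs0 : 0 ≤ s := Real.sqrt_nonneg r
  have hss : s * s = r := Real.mul_self_sqrt hr0
  have hs1 : s < 1 := by nlinarith
  have hFnorm : Summable (fun p : ℕ × ℕ => ‖F p.1 p.2‖) := by
    refine Summable.of_nonneg_of_le (fun p => norm_nonneg _) (fun p => ?_)
      (Summable.mul_of_nonneg
        (f := fun j : ℕ => ((k : ℝ) + 1) * s ^ (j + 1)) (g := fun n : ℕ => s ^ (n + 1))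
        ?_ ?_ (fun j => by positivity) (fun n => by positivity))
    · obtain ⟨j, n⟩ := p
      simp only [hF]
      split
      · next hd =>
        have hjn : j + 1 ≤ n + 1 :=
          le_trans (hQj j) (Nat.le_of_dvd (Nat.succ_pos n) hd)
        rw [norm_mul, norm_pow]
        have e1 : r ^ (n + 1) = s ^ (n + 1) * s ^ (n + 1) := by
          rw [← mul_pow, hss]
        have e2 : s ^ (n + 1) ≤ s ^ (j + 1) :=
          pow_le_pow_of_le_one hs0 hs1.le hjn
        calc ‖a j‖ * r ^ (n + 1) ≤ ((k : ℝ) + 1) * r ^ (n + 1) :=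
              mul_le_mul_of_nonneg_right (ha_bd j) (by positivity)
          _ = ((k : ℝ) + 1) * (s ^ (n + 1) * s ^ (n + 1)) := by rw [e1]
          _ ≤ ((k : ℝ) + 1) * (s ^ (j + 1) * s ^ (n + 1)) := by
              have : s ^ (n + 1) * s ^ (n + 1) ≤ s ^ (j + 1) * s ^ (n + 1) :=
                mul_le_mul_of_nonneg_right e2 (by positivity)
              nlinarith [this]
          _ = ((k : ℝ) + 1) * s ^ (j + 1) * s ^ (n + 1) := by ring
      · simp only [norm_zero]
        positivity
    · have hgeo : Summable (fun j : ℕ => s ^ j) := summable_geometric_of_lt_one hs0 hs1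
      refine (hgeo.mul_left (((k : ℝ) + 1) * s)).congr fun j => ?_
      rw [pow_succ]
      ring
    · have hgeo : Summable (fun n : ℕ => s ^ n) := summable_geometric_of_lt_one hs0 hs1
      refine (hgeo.mul_left s).congr fun n => ?_
      rw [pow_succ]
      ring
  have hFsum : Summable (Function.uncurry F) := Summable.of_norm hFnorm
  -- row sums
  have hrow : ∀ j : ℕ, ∑' n : ℕ, F j n
      = a j * x ^ q ^ (j + 1) / (1 - x ^ q ^ (j + 1)) := by
    intro j
    set Q := q ^ (j + 1) with hQdef
    have hQ0 : 0 < Q := hQpos j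
    have hinj : Function.Injective (fun m : ℕ => Q * m + (Q - 1)) := by
      intro m1 m2 h
      simp only at h
      have h' : Q * m1 = Q * m2 := by omega
      exact Nat.eq_of_mul_eq_mul_left hQ0 h'
    have hsupp : ∀ n ∉ Set.range (fun m : ℕ => Q * m + (Q - 1)), F j n = 0 := by
      intro n hn
      simp only [hF]
      rw [if_neg]
      intro hd
      obtain ⟨c, hc⟩ := hd
      rw [← hQdef] at hc
      rcases c with _ | c
      · omega
      apply hn
      refine ⟨c, ?_⟩
      simp only
      rw [Nat.mul_succ] at hc
      omega
    have key := hinj.tsum_eq (f := fun n => F j n)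
      (Function.support_subset_iff'.2 hsupp)
    rw [← key]
    have hterm : ∀ m : ℕ, F j (Q * m + (Q - 1)) = a j * (x ^ Q) ^ (m + 1) := by
      intro m
      have he : Q * m + (Q - 1) + 1 = Q * (m + 1) := by
        rw [Nat.mul_succ]
        omega
      simp only [hF]
      rw [if_pos (by rw [he]; exact Dvd.intro _ rfl), he, pow_mul]
    calc ∑' m : ℕ, F j (Q * m + (Q - 1)) = ∑' m : ℕ, a j * (x ^ Q) ^ (m + 1) :=
          tsum_congr hterm
      _ = a j * ∑' m : ℕ, (x ^ Q) ^ (m + 1) := tsum_mul_left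
      _ = a j * (x ^ Q / (1 - x ^ Q)) := by rw [tsum_pow_succ (hxQ j)]
      _ = a j * x ^ Q / (1 - x ^ Q) := (mul_div_assoc _ _ _).symm
  -- column sums
  have hcol : ∀ n : ℕ, ∑' j : ℕ, F j n
      = ((padicValNat q (n + 1) % k : ℕ) : ℂ) * x ^ (n + 1) := by
    intro n
    set ν := padicValNat q (n + 1) with hν
    rw [tsum_eq_sum (s := Finset.range ν) (fun j hj => ?_)]
    · have hterm : ∀ j ∈ Finset.range ν, F j n = a j * x ^ (n + 1) := by
        intro j hj
        rw [Finset.mem_range] at hj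
        simp only [hF]
        rw [if_pos ((pow_dvd_padic hq).2 (by omega))]
      rw [Finset.sum_congr rfl hterm, ← Finset.sum_mul]
      congr 1
      exact sum_a_eq k hk ν
    · simp only [hF]
      rw [Finset.mem_range] at hj
      rw [if_neg]
      intro hd
      have := (pow_dvd_padic hq).1 hd
      omega
  refine ⟨hsum1, ?_⟩
  rw [Summable.tsum_eq_zero_add hg]
  have h0 : ((padicValNat q 0 % k : ℕ) : ℂ) * x ^ 0 = 0 := by
    simp [padicValNat.zero]
  rw [h0, zero_add]
  have hswap : ∑' (n : ℕ) (j : ℕ), F j n = ∑' (j : ℕ) (n : ℕ), F j n :=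
    Summable.tsum_comm' hFsum (fun j => (hFsum.prod_factor j))
      (fun n => (hFsum.prod_symm.prod_factor n))
  calc ∑' n : ℕ, ((padicValNat q (n + 1) % k : ℕ) : ℂ) * x ^ (n + 1)
      = ∑' (n : ℕ) (j : ℕ), F j n := tsum_congr fun n => (hcol n).symm
    _ = ∑' (j : ℕ) (n : ℕ), F j n := hswap
    _ = ∑' j : ℕ, a j * x ^ q ^ (j + 1) / (1 - x ^ q ^ (j + 1)) := tsum_congr hrow
end

section
/- Let q ≥ 2 and k ≥ 2 be integers, let h and ℓ be positive integers with h relatively prime to q, and set ω = exp(2πih/q^ℓ). Then V_{q,k}(ωx) − V_{q,k}(x) is a rational function of x: there exist polynomials P(X), Q(X) ∈ ℂ[X] with Q ≠ 0 such that V_{q,k}(ωx) − V_{q,k}(x) = P(x)/Q(x) for every complex number x with |x| < 1 and Q(x) ≠ 0. -/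
open Complex Polynomial

/-- Let `q ≥ 2` and `k ≥ 2`, let `h, ℓ ≥ 1` with `h` coprime to `q`, and set
`ω = exp(2πih/q^ℓ)`. Then `V_{q,k}(ωx) − V_{q,k}(x)` is a rational function of `x`: there are
polynomials `P, Q ∈ ℂ[X]` with `Q ≠ 0` such that the difference equals `P(x)/Q(x)` for every
complex `x` with `|x| < 1` and `Q(x) ≠ 0`. Here `V_{q,k}(x) = ∑_{n ≥ 1} (ν_q(n) mod k) xⁿ`. -/
theorem Vqk_omega_difference_rational (q k h ℓ : ℕ) (hq : 2 ≤ q) (hk : 2 ≤ k)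
    (hh : 1 ≤ h) (hℓ : 1 ≤ ℓ) (hcop : Nat.Coprime h q) :
    ∃ P Q : Polynomial ℂ, Q ≠ 0 ∧ ∀ x : ℂ, ‖x‖ < 1 → Q.eval x ≠ 0 →
      (∑' n : ℕ, ((padicValNat q n % k : ℕ) : ℂ) *
          (Complex.exp (2 * Real.pi * Complex.I * h / (q : ℂ) ^ ℓ) * x) ^ n)
        - (∑' n : ℕ, ((padicValNat q n % k : ℕ) : ℂ) * x ^ n)
        = P.eval x / Q.eval x := by
  set ω : ℂ := Complex.exp (2 * Real.pi * Complex.I * h / (q : ℂ) ^ ℓ) with hω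
  set N : ℕ := q ^ ℓ with hN
  have hq1 : 1 < q := hq
  have hq0 : (q : ℂ) ≠ 0 := by
    exact_mod_cast (by omega : q ≠ 0)
  have hqpow0 : ((q : ℂ)) ^ ℓ ≠ 0 := pow_ne_zero _ hq0
  have hNpos : 0 < N := pow_pos (by omega) ℓ
  have hN1 : 1 < N := Nat.one_lt_pow (by omega) hq1
  haveI : NeZero N := ⟨hNpos.ne'⟩
  set c : ℕ → ℂ := fun n => ((padicValNat q n % k : ℕ) : ℂ) with hc
  set a : ℕ → ℂ := fun n => c n * (ω ^ n - 1) with ha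
  -- norm of ω is 1
  have hωarg : (2 * Real.pi * Complex.I * h / (q : ℂ) ^ ℓ)
      = ((2 * Real.pi * h / (q : ℝ) ^ ℓ : ℝ) : ℂ) * Complex.I := by
    push_cast
    field_simp
  have hωnorm : ‖ω‖ = 1 := by
    rw [hω, hωarg]
    exact Complex.norm_exp_ofReal_mul_I _
  -- ω ^ N = 1
  have hωN : ω ^ N = 1 := by
    rw [hω, ← Complex.exp_nat_mul]
    have harg : (N : ℂ) * (2 * Real.pi * Complex.I * h / (q : ℂ) ^ ℓ)
        = (h : ℤ) * (2 * Real.pi * Complex.I) := by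
      rw [hN]
      push_cast
      field_simp
    rw [harg, Complex.exp_int_mul_two_pi_mul_I]
  -- characterization of padicValNat for general base
  have hval_dvd : ∀ n : ℕ, q ^ padicValNat q n ∣ n := by
    intro n
    exact pow_padicValNat_dvd
  have hval_le : ∀ n v : ℕ, n ≠ 0 → q ^ v ∣ n → v ≤ padicValNat q n := by
    intro n v hn hd
    exact (Nat.pow_dvd_iff_le_padicValNat (by omega) hn).mp hd
  -- periodicity of the valuation off multiples of N
  have hval : ∀ n : ℕ, ¬ (N ∣ n) → padicValNat q (n + N) = padicValNat q n := by
    intro n hn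
    have hn0 : n ≠ 0 := by rintro rfl; exact hn (dvd_zero N)
    set v := padicValNat q n with hv
    have hdvd : q ^ v ∣ n := hval_dvd n
    have hvlt : v < ℓ := by
      by_contra hge
      exact hn (dvd_trans (pow_dvd_pow q (le_of_not_gt hge)) hdvd)
    have hnot : ¬ q ^ (v + 1) ∣ n := by
      intro hdd
      have := hval_le n (v + 1) hn0 hdd
      omega
    have hNv : q ^ v ∣ N := pow_dvd_pow q hvlt.le
    have hNv1 : q ^ (v + 1) ∣ N := pow_dvd_pow q hvlt
    have h1 : q ^ v ∣ n + N := hdvd.add hNv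
    have h2 : ¬ q ^ (v + 1) ∣ n + N := by
      intro hdd
      exact hnot (by simpa using Nat.dvd_sub hdd hNv1)
    have hge : v ≤ padicValNat q (n + N) := hval_le _ v (by omega) h1
    have hle : padicValNat q (n + N) ≤ v := by
      by_contra hlt
      exact h2 (dvd_trans (pow_dvd_pow q (by omega)) (hval_dvd (n + N)))
    omega
  -- periodicity of a
  have haN : ∀ t : ℕ, a (t * N) = 0 := by
    intro t
    have : ω ^ (t * N) = 1 := by
      rw [mul_comm, pow_mul, hωN, one_pow]
    simp [ha, this]
  have haper : ∀ t m : ℕ, m < N → a (t * N + m) = a m := by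
    intro t m hm
    rcases Nat.eq_zero_or_pos m with rfl | hm0
    · rw [Nat.add_zero, haN t]; simp [ha]
    · have hv' : padicValNat q (t * N + m) = padicValNat q m := by
        induction t with
        | zero => simp
        | succ s ih =>
          have hnd : ¬ N ∣ s * N + m := by
            intro hd
            have : N ∣ m := (Nat.dvd_add_right ⟨s, by ring⟩).mp hd
            exact absurd (Nat.le_of_dvd hm0 this) (by omega)
          have heq : (s + 1) * N + m = (s * N + m) + N := by ring
          rw [heq, hval _ hnd, ih]
      have hω' : ω ^ (t * N + m) = ω ^ m := by
        rw [pow_add, mul_comm t N, pow_mul, hωN, one_pow, one_mul]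
      simp only [ha, hc, hω', hv']
  -- bound on a
  have hcbound : ∀ n : ℕ, ‖c n‖ ≤ (k : ℝ) := by
    intro n
    simp only [hc, Complex.norm_natCast]
    exact_mod_cast (Nat.mod_lt _ (by omega : 0 < k)).le
  refine ⟨∑ m ∈ Finset.range N, Polynomial.C (a m) * Polynomial.X ^ m,
    1 - Polynomial.X ^ N, ?_, ?_⟩
  · intro hQ
    have := congrArg (Polynomial.eval 0) hQ
    simp [zero_pow hNpos.ne'] at this
  intro x hx hQx
  have hωx : ‖ω * x‖ < 1 := by
    rw [norm_mul, hωnorm, one_mul]; exact hx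
  -- summability facts
  have hsum : ∀ y : ℂ, ‖y‖ < 1 → Summable (fun n => c n * y ^ n) := by
    intro y hy
    apply Summable.of_norm_bounded (g := fun n => (k : ℝ) * ‖y‖ ^ n)
      ((summable_geometric_of_lt_one (norm_nonneg y) hy).mul_left _)
    intro n
    rw [norm_mul, norm_pow]
    exact mul_le_mul_of_nonneg_right (hcbound n) (by positivity)
  have hs1 : Summable (fun n => c n * (ω * x) ^ n) := hsum _ hωx
  have hs2 : Summable (fun n => c n * x ^ n) := hsum _ hx
  have hsa : Summable (fun n => a n * x ^ n) := by
    have : (fun n => a n * x ^ n) = fun n => c n * (ω * x) ^ n - c n * x ^ n := by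
      funext n
      simp only [ha, mul_pow]
      ring
    rw [this]
    exact hs1.sub hs2
  -- the series difference equals the series of a
  have hdiff : (∑' n : ℕ, c n * (ω * x) ^ n) - (∑' n : ℕ, c n * x ^ n)
      = ∑' n : ℕ, a n * x ^ n := by
    rw [← hs1.tsum_sub hs2]
    congr 1
    funext n
    simp only [ha, mul_pow]
    ring
  -- geometric series for x^N
  have hxN : ‖x ^ N‖ < 1 := by
    rw [norm_pow]
    exact pow_lt_one₀ (norm_nonneg x) hx hNpos.ne'
  -- rearrange using division with remainder
  have hre : (∑' n : ℕ, a n * x ^ n)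
      = (∑ m ∈ Finset.range N, a m * x ^ m) * (1 - x ^ N)⁻¹ := by
    have hsa' : Summable (fun p : ℕ × Fin N => a (p.1 * N + (p.2 : ℕ)) * x ^ (p.1 * N + (p.2 : ℕ))) := by
      have := ((Nat.divModEquiv N).symm.summable_iff (f := fun n => a n * x ^ n)).mpr hsa
      simpa [Nat.divModEquiv, Function.comp_def] using this
    calc (∑' n : ℕ, a n * x ^ n)
        = ∑' p : ℕ × Fin N, a (p.1 * N + (p.2 : ℕ)) * x ^ (p.1 * N + (p.2 : ℕ)) := by
          rw [← (Nat.divModEquiv N).symm.tsum_eq (f := fun n => a n * x ^ n)]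
          simp [Nat.divModEquiv]
      _ = ∑' t : ℕ, ∑ m : Fin N, a (t * N + (m : ℕ)) * x ^ (t * N + (m : ℕ)) := by
          rw [Summable.tsum_prod' hsa' (fun t => Summable.of_finite)]
          congr 1
          funext t
          exact tsum_fintype _
      _ = ∑' t : ℕ, (∑ m ∈ Finset.range N, a m * x ^ m) * (x ^ N) ^ t := by
          congr 1
          funext t
          rw [Finset.sum_mul, ← Fin.sum_univ_eq_sum_range (fun m => a m * x ^ m * (x ^ N) ^ t) N]
          congr 1
          funext m
          rw [haper t m m.isLt, pow_add, mul_comm t N, pow_mul]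
          ring
      _ = (∑ m ∈ Finset.range N, a m * x ^ m) * (1 - x ^ N)⁻¹ := by
          rw [tsum_mul_left, tsum_geometric_of_norm_lt_one hxN]
  -- conclude
  rw [hdiff, hre]
  rw [div_eq_mul_inv]
  congr 1
  · simp [Polynomial.eval_finset_sum]
  · simp
end

section
/- Let q ≥ 2 and k ≥ 2 be integers and set f_r(x) = x^{q^r}/(1 − x^{q^r}) for integers r ≥ 1, and A_{k,j}(x) = f_{kj+1}(x) + ⋯ + f_{kj+k−1}(x) + (1 − k)·f_{k(j+1)}(x) for integers j ≥ 0. Then for every real number x ∈ (0,1) and all integers j ≥ 0: (i) A_{k,j}(x) > 0, and (ii) A_{k,j}(x) > A_{k,j+1}(x). Moreover, f_n(x) > f_{n+t}(x) for all integers n ≥ 1 and t ≥ 1 and all x ∈ (0,1). -/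
/-- The bitty fraction `f_r(x) = x^{q^r} / (1 − x^{q^r})`. -/
noncomputable def bittyFrac (q r : ℕ) (x : ℝ) : ℝ :=
  x ^ q ^ r / (1 - x ^ q ^ r)

/-- `A_{k,j}(x) = f_{kj+1}(x) + ⋯ + f_{kj+k−1}(x) + (1 − k)·f_{k(j+1)}(x)`. -/
noncomputable def Akj (q k j : ℕ) (x : ℝ) : ℝ :=
  (∑ i ∈ Finset.Ico (k * j + 1) (k * j + k), bittyFrac q i x)
    + (1 - (k : ℝ)) * bittyFrac q (k * (j + 1)) x

/-- Monotonicity of `u ↦ u/(1-u)` on `(0,1)`. -/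
lemma frac_mono {u v : ℝ} (_hu : 0 < u) (huv : u < v) (hv : v < 1) :
    u / (1 - u) < v / (1 - v) := by
  rw [div_lt_div_iff₀ (by linarith) (by linarith)]
  nlinarith

/-- `f_{n+t}(x) < f_n(x)`. -/
lemma bittyFrac_strict_anti (q : ℕ) (hq : 2 ≤ q) {n m : ℕ} (hnm : n < m)
    {x : ℝ} (hx0 : 0 < x) (hx1 : x < 1) :
    bittyFrac q m x < bittyFrac q n x := by
  unfold bittyFrac
  have hqq : q ^ n < q ^ m := Nat.pow_lt_pow_right (by omega) hnm
  have h1 : x ^ q ^ m < x ^ q ^ n := pow_lt_pow_right_of_lt_one₀ hx0 hx1 hqq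
  have h2 : 0 < x ^ q ^ m := pow_pos hx0 _
  have h3 : x ^ q ^ n < 1 := pow_lt_one₀ hx0.le hx1 (pow_pos (by omega : 0 < q) n).ne'
  exact frac_mono h2 h1 h3

/-- Shift identity: `f_{r+s}(x) = f_r(x^{q^s})`. -/
lemma bittyFrac_shift (q r s : ℕ) (x : ℝ) :
    bittyFrac q (r + s) x = bittyFrac q r (x ^ q ^ s) := by
  unfold bittyFrac
  rw [← pow_mul, ← pow_add, Nat.add_comm s r]

/-- Closed form for `u/(1-u) - u^m/(1-u^m)`. -/
lemma frac_diff_eq {u : ℝ} (hu0 : 0 < u) (hu1 : u < 1) {m : ℕ} (hm : 2 ≤ m) :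
    u / (1 - u) - u ^ m / (1 - u ^ m)
      = (∑ i ∈ Finset.range (m - 1), u ^ (i + 1)) / (1 - u ^ m) := by
  have h1 : (1 : ℝ) - u ≠ 0 := by linarith
  have hum : u ^ m < 1 := pow_lt_one₀ hu0.le hu1 (by omega)
  have h2 : (1 : ℝ) - u ^ m ≠ 0 := by linarith
  have hgeom : (∑ i ∈ Finset.range (m - 1), u ^ i) * (u - 1) = u ^ (m - 1) - 1 :=
    geom_sum_mul u (m - 1)
  have hpow : u * u ^ (m - 1) = u ^ m := by
    rw [← pow_succ']
    congr 1
    omega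
  have hsum : ∑ i ∈ Finset.range (m - 1), u ^ (i + 1)
      = u * ∑ i ∈ Finset.range (m - 1), u ^ i := by
    rw [Finset.mul_sum]
    exact Finset.sum_congr rfl fun i _ => by rw [pow_succ']
  rw [hsum]
  have key : u * (∑ i ∈ Finset.range (m - 1), u ^ i) * (1 - u) = u - u ^ m := by
    linear_combination (-u) * hgeom - hpow
  rw [div_sub_div _ _ h1 h2, div_eq_div_iff (mul_ne_zero h1 h2) h2]
  linear_combination (u ^ m - 1) * key

/-- Strict monotonicity in `x` of `f_a(x) - f_b(x)` for `a < b`. -/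
lemma bittyFrac_diff_mono (q : ℕ) (hq : 2 ≤ q) {a b : ℕ} (hab : a < b)
    {x y : ℝ} (hx0 : 0 < x) (hxy : x < y) (hy1 : y < 1) :
    bittyFrac q a x - bittyFrac q b x < bittyFrac q a y - bittyFrac q b y := by
  set m := q ^ (b - a) with hm
  have hm2 : 2 ≤ m := le_trans hq (Nat.le_self_pow (by omega) q)
  have key : ∀ z : ℝ, 0 < z → z < 1 →
      bittyFrac q a z - bittyFrac q b z
        = (∑ i ∈ Finset.range (m - 1), (z ^ q ^ a) ^ (i + 1)) / (1 - (z ^ q ^ a) ^ m) := by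
    intro z hz0 hz1
    have hu0 : 0 < z ^ q ^ a := pow_pos hz0 _
    have hu1 : z ^ q ^ a < 1 := pow_lt_one₀ hz0.le hz1 (pow_pos (by omega : 0 < q) a).ne'
    have hzb : z ^ q ^ b = (z ^ q ^ a) ^ m := by
      rw [← pow_mul, hm, ← pow_add, Nat.add_sub_cancel' hab.le]
    unfold bittyFrac
    rw [hzb]
    exact frac_diff_eq hu0 hu1 hm2
  have hy0 : 0 < y := lt_trans hx0 hxy
  have hx1 : x < 1 := lt_trans hxy hy1
  rw [key x hx0 hx1, key y hy0 hy1]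
  set u := x ^ q ^ a with hu
  set v := y ^ q ^ a with hv
  have hu0 : 0 < u := pow_pos hx0 _
  have hv0 : 0 < v := pow_pos hy0 _
  have huv : u < v := pow_lt_pow_left₀ hxy hx0.le (pow_pos (by omega : 0 < q) a).ne'
  have hv1 : v < 1 := pow_lt_one₀ hy0.le hy1 (pow_pos (by omega : 0 < q) a).ne'
  have hu1 : u < 1 := lt_trans huv hv1
  have hum : u ^ m < 1 := pow_lt_one₀ hu0.le hu1 (by omega)
  have hvm : v ^ m < 1 := pow_lt_one₀ hv0.le hv1 (by omega)
  have hvm0 : 0 < 1 - v ^ m := by linarith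
  have hden : 1 - v ^ m ≤ 1 - u ^ m := by
    have : u ^ m ≤ v ^ m := pow_le_pow_left₀ hu0.le huv.le m
    linarith
  have hnum : (∑ i ∈ Finset.range (m - 1), u ^ (i + 1))
      < ∑ i ∈ Finset.range (m - 1), v ^ (i + 1) := by
    apply Finset.sum_lt_sum_of_nonempty
    · exact Finset.nonempty_range_iff.mpr (by omega)
    · intro i _
      exact pow_lt_pow_left₀ huv hu0.le (by omega)
  have hBnonneg : 0 ≤ ∑ i ∈ Finset.range (m - 1), v ^ (i + 1) :=
    Finset.sum_nonneg fun i _ => (pow_pos hv0 _).le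
  calc (∑ i ∈ Finset.range (m - 1), u ^ (i + 1)) / (1 - u ^ m)
      < (∑ i ∈ Finset.range (m - 1), v ^ (i + 1)) / (1 - u ^ m) := by
        apply div_lt_div_of_pos_right hnum (by linarith)
    _ ≤ (∑ i ∈ Finset.range (m - 1), v ^ (i + 1)) / (1 - v ^ m) := by
        gcongr

/-- `A_{k,j}` as a sum of positive differences. -/
lemma Akj_eq_sum_diff (q k j : ℕ) (hk : 2 ≤ k) (x : ℝ) :
    Akj q k j x = ∑ i ∈ Finset.Ico (k * j + 1) (k * j + k),
      (bittyFrac q i x - bittyFrac q (k * j + k) x) := by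
  have hcard : (Finset.Ico (k * j + 1) (k * j + k)).card = k - 1 := by
    rw [Nat.card_Ico]; omega
  have hkj : k * (j + 1) = k * j + k := by ring
  rw [Finset.sum_sub_distrib, Finset.sum_const, hcard, Akj, hkj]
  have : ((k - 1 : ℕ) : ℝ) = (k : ℝ) - 1 := by
    have : (1 : ℕ) ≤ k := by omega
    push_cast [this]
    ring
  rw [nsmul_eq_mul, this]
  ring

/-- Let `q ≥ 2` and `k ≥ 2`. Then for every real `x ∈ (0,1)` and all
integers `j ≥ 0`: (i) `A_{k,j}(x) > 0`; (ii) `A_{k,j}(x) > A_{k,j+1}(x)`. Moreover,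
`f_n(x) > f_{n+t}(x)` for all integers `n ≥ 1`, `t ≥ 1` and all `x ∈ (0,1)`. -/
theorem Akj_positive_and_decreasing (q k : ℕ) (hq : 2 ≤ q) (hk : 2 ≤ k) :
    (∀ (j : ℕ) (x : ℝ), 0 < x → x < 1 → 0 < Akj q k j x) ∧
    (∀ (j : ℕ) (x : ℝ), 0 < x → x < 1 → Akj q k (j + 1) x < Akj q k j x) ∧
    (∀ (n t : ℕ), 1 ≤ n → 1 ≤ t → ∀ x : ℝ, 0 < x → x < 1 →
      bittyFrac q (n + t) x < bittyFrac q n x) := by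
  refine ⟨?_, ?_, ?_⟩
  · -- positivity
    intro j x hx0 hx1
    rw [Akj_eq_sum_diff q k j hk x]
    apply Finset.sum_pos
    · intro i hi
      rw [Finset.mem_Ico] at hi
      have := bittyFrac_strict_anti q hq (show i < k * j + k by omega) hx0 hx1
      linarith
    · exact Finset.nonempty_Ico.mpr (by omega)
  · -- decreasing
    intro j x hx0 hx1
    set y := x ^ q ^ k with hy
    have hy0 : 0 < y := pow_pos hx0 _
    have hqk : 2 ≤ q ^ k := le_trans hq (Nat.le_self_pow (by omega) q)
    have hy1 : y < 1 := pow_lt_one₀ hx0.le hx1 (by omega)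
    have hyx : y < x := by
      calc y = x ^ q ^ k := rfl
        _ < x ^ 1 := pow_lt_pow_right_of_lt_one₀ hx0 hx1 (by omega)
        _ = x := pow_one x
    -- A_{k,j+1}(x) = A_{k,j}(y)
    have hshift : Akj q k (j + 1) x = Akj q k j y := by
      rw [Akj_eq_sum_diff q k (j+1) hk x, Akj_eq_sum_diff q k j hk y]
      have h1 : k * (j + 1) + 1 = (k * j + 1) + k := by ring
      have h2 : k * (j + 1) + k = (k * j + k) + k := by ring
      rw [h1, h2, ← Finset.sum_Ico_add']
      apply Finset.sum_congr rfl
      intro i _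
      rw [bittyFrac_shift q i k x, bittyFrac_shift q (k * j + k) k x]
    rw [hshift, Akj_eq_sum_diff q k j hk y, Akj_eq_sum_diff q k j hk x]
    apply Finset.sum_lt_sum_of_nonempty (Finset.nonempty_Ico.mpr (by omega))
    intro i hi
    rw [Finset.mem_Ico] at hi
    exact bittyFrac_diff_mono q hq (show i < k * j + k by omega) hy0 hyx hx1
  · -- f strictly decreasing
    intro n t hn ht x hx0 hx1
    exact bittyFrac_strict_anti q hq (by omega) hx0 hx1
end
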